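/- arXiv:2403.15914 — 4 statements merged into one kernel-verified Lean document; each statement's English description precedes it below -/
import Mathlib

section
/- Let K be a commutative field of characteristic p > 0 with a derivation δ. Then in K[t;δ], for every b ∈ K one has (t − b)^p = t^p − (b^p + δ^{p−1}(b)). -/
/-- A differential (Ore) polynomial ring `D[t;δ]`: a ring containing `D` via the
ring embedding `ι`, with an element `t` satisfying `t·a = a·t + δ(a)`, and which is
freely spanned as a left `D`-module by the powers of `t` (via `rep`). -/
structure DiffPolyRing (D : Type*) [Ring D] (δ : D → D) where
  carrier : Type*
  [ring : Ring carrier]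
  ι : D →+* carrier
  t : carrier
  tcomm : ∀ a : D, t * ι a = ι a * t + ι (δ a)
  rep : carrier ≃+ (ℕ →₀ D)
  rep_symm_apply : ∀ c : ℕ →₀ D, rep.symm c = c.sum fun i a => ι a * t ^ i

attribute [instance] DiffPolyRing.ring

namespace DiffPolyRing

variable {D : Type*} [Ring D] {δ : D → D}

/-- The degree of a differential polynomial, with `deg 0 = ⊥`. -/
noncomputable def deg (P : DiffPolyRing D δ) (p : P.carrier) : WithBot ℕ :=
  (P.rep p).support.max

end DiffPolyRing


open Polynomial

section DiffPolyHelpers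
variable {K : Type*} [Field K] {δ : K → K}

private noncomputable def Ap (P : DiffPolyRing K δ) (b : K) : Polynomial P.carrier :=
  C P.t * X - C (P.ι b)

private noncomputable def Wp (P : DiffPolyRing K δ) (b : K) : ℕ → Polynomial P.carrier
  | 0 => C P.t
  | (k+1) => C (P.ι (δ^[k+1] b)) * X ^ k

private lemma mono_mul (P : DiffPolyRing K δ) (a c : P.carrier) (i j : ℕ) :
    (C a * X ^ i) * (C c * X ^ j) = C (a * c) * X ^ (i + j) := by
  rw [mul_assoc, ← mul_assoc (X ^ i), X_pow_mul, mul_assoc, ← pow_add, ← mul_assoc, ← C_mul]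

private lemma A_comm_mono (P : DiffPolyRing K δ) (b : K) (x : P.carrier) (j : ℕ) :
    Ap P b * (C x * X ^ j) =
      (C x * X ^ j) * Ap P b + C (P.t * x - x * P.t) * X ^ (j+1)
        - C (P.ι b * x - x * P.ι b) * X ^ j := by
  have hXt : (C P.t * X : Polynomial P.carrier) = C P.t * X ^ 1 := by rw [pow_one]
  have hCb : (C (P.ι b) : Polynomial P.carrier) = C (P.ι b) * X ^ 0 := by
    rw [pow_zero, mul_one]
  have e1 : Ap P b * (C x * X ^ j) = C (P.t * x) * X ^ (j+1) - C (P.ι b * x) * X ^ j := by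
    rw [Ap, sub_mul, hXt, hCb, mono_mul, mono_mul, Nat.add_comm 1 j, Nat.zero_add]
  have e2 : (C x * X ^ j) * Ap P b = C (x * P.t) * X ^ (j+1) - C (x * P.ι b) * X ^ j := by
    rw [Ap, mul_sub, hXt, hCb, mono_mul, mono_mul]
    norm_num
  rw [e1, e2, C_sub, C_sub, sub_mul, sub_mul]
  abel

private lemma A_mul_W (P : DiffPolyRing K δ) (b : K) (k : ℕ) :
    Ap P b * Wp P b k = Wp P b k * Ap P b + Wp P b (k + 1) := by
  cases k with
  | zero =>
    have h := A_comm_mono P b P.t 0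
    have h2 : P.ι b * P.t - P.t * P.ι b = -(P.ι (δ b)) := by
      rw [P.tcomm b]; abel
    rw [sub_self, C_0, zero_mul, add_zero, h2, map_neg, neg_mul, sub_neg_eq_add] at h
    simpa [Wp] using h
  | succ k =>
    have h := A_comm_mono P b (P.ι (δ^[k+1] b)) k
    have h1 : P.t * P.ι (δ^[k+1] b) - P.ι (δ^[k+1] b) * P.t = P.ι (δ (δ^[k+1] b)) := by
      rw [P.tcomm]; abel
    have h2 : P.ι b * P.ι (δ^[k+1] b) - P.ι (δ^[k+1] b) * P.ι b = 0 := by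
      rw [← map_mul, ← map_mul, mul_comm]; exact sub_self _
    rw [h1, h2, C_0, zero_mul, sub_zero] at h
    show Ap P b * (C (P.ι (δ^[k+1] b)) * X ^ k)
        = (C (P.ι (δ^[k+1] b)) * X ^ k) * Ap P b + C (P.ι (δ^[k+1+1] b)) * X ^ (k+1)
    rw [Function.iterate_succ_apply' δ (k+1)]
    exact h
private lemma derivative_A_pow (P : DiffPolyRing K δ) (b : K) (n : ℕ) :
    derivative (Ap P b ^ n) =
      ∑ k ∈ Finset.range n, (n.choose (k+1)) • (Wp P b k * Ap P b ^ (n - 1 - k)) := by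
  induction n with
  | zero => simp
  | succ n ih =>
    have hdA : derivative (Ap P b) = C P.t := by
      rw [Ap, derivative_sub, derivative_C_mul_X, derivative_C, sub_zero]
    rw [pow_succ', derivative_mul, hdA, ih, Finset.mul_sum]
    simp only [mul_smul_comm]
    have key : ∀ k ∈ Finset.range n,
        (n.choose (k+1)) • (Ap P b * (Wp P b k * Ap P b ^ (n - 1 - k)))
          = (n.choose (k+1)) • (Wp P b k * Ap P b ^ (n - k))
            + (n.choose (k+1)) • (Wp P b (k+1) * Ap P b ^ (n - 1 - k)) := by
      intro k hk
      rw [Finset.mem_range] at hk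
      have hmm : Ap P b * Ap P b ^ (n - 1 - k) = Ap P b ^ (n - k) := by
        rw [← pow_succ']
        congr 1
        omega
      rw [← mul_assoc, A_mul_W, add_mul, mul_assoc, hmm, smul_add]
    calc C P.t * Ap P b ^ n
          + ∑ k ∈ Finset.range n, (n.choose (k+1)) • (Ap P b * (Wp P b k * Ap P b ^ (n - 1 - k)))
        = C P.t * Ap P b ^ n
          + (∑ k ∈ Finset.range n, (n.choose (k+1)) • (Wp P b k * Ap P b ^ (n - k))
            + ∑ k ∈ Finset.range n, (n.choose (k+1)) • (Wp P b (k+1) * Ap P b ^ (n - 1 - k))) := by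
          rw [Finset.sum_congr rfl key, Finset.sum_add_distrib]
      _ = ∑ k ∈ Finset.range (n+1), ((n+1).choose (k+1)) • (Wp P b k * Ap P b ^ (n - k)) := by
          have split : ∀ k, ((n+1).choose (k+1)) • (Wp P b k * Ap P b ^ (n - k))
              = (n.choose k) • (Wp P b k * Ap P b ^ (n - k))
                + (n.choose (k+1)) • (Wp P b k * Ap P b ^ (n - k)) := by
            intro k
            rw [Nat.choose_succ_succ, add_smul]
          rw [Finset.sum_congr rfl (fun k _ => split k), Finset.sum_add_distrib]
          have e1 : ∑ k ∈ Finset.range (n+1), (n.choose k) • (Wp P b k * Ap P b ^ (n - k))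
              = C P.t * Ap P b ^ n
                + ∑ k ∈ Finset.range n, (n.choose (k+1)) • (Wp P b (k+1) * Ap P b ^ (n - 1 - k)) := by
            rw [Finset.sum_range_succ']
            rw [add_comm]
            congr 1
            · simp [Wp]
            · refine Finset.sum_congr rfl fun k hk => ?_
              have : n - (k + 1) = n - 1 - k := by omega
              rw [this]
          have e2 : ∑ k ∈ Finset.range (n+1), (n.choose (k+1)) • (Wp P b k * Ap P b ^ (n - k))
              = ∑ k ∈ Finset.range n, (n.choose (k+1)) • (Wp P b k * Ap P b ^ (n - k)) := by
            rw [Finset.sum_range_succ, Nat.choose_succ_self, zero_smul, add_zero]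
          rw [e1, e2]
          abel
private lemma derivative_A_pow_prime (P : DiffPolyRing K δ) (b : K) {p : ℕ} (hp : p.Prime)
    (hpz : ((p : ℕ) : P.carrier) = 0) :
    derivative (Ap P b ^ p) = C (P.ι (δ^[p-1] b)) * X ^ (p-2) := by
  have hp2 := hp.two_le
  rw [derivative_A_pow]
  rw [Finset.sum_eq_single_of_mem (p-1) (Finset.mem_range.mpr (by omega))]
  · have h1 : p - 1 + 1 = p := by omega
    rw [h1, Nat.choose_self, one_smul, Nat.sub_self, pow_zero, mul_one]
    have h2 : p - 1 = (p - 2) + 1 := by omega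
    rw [h2]
    show C (P.ι (δ^[p-2+1] b)) * X ^ (p-2) = _
    rw [← h2]
  · intro k hk hne
    rw [Finset.mem_range] at hk
    obtain ⟨m, hm⟩ := hp.dvd_choose_self (Nat.succ_ne_zero k) (by omega)
    rw [hm, mul_smul]
    have hQ : ((p : ℕ) : Polynomial P.carrier) = 0 := by
      rw [← C_eq_natCast, hpz, C_0]
    rw [nsmul_eq_mul, hQ, zero_mul]

private lemma natDegree_A_le (P : DiffPolyRing K δ) (b : K) : (Ap P b).natDegree ≤ 1 := by
  rw [Ap]
  refine le_trans (natDegree_sub_le _ _) (max_le ?_ ?_)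
  · refine le_trans (natDegree_mul_le) ?_
    simp [natDegree_C, natDegree_X_le]
  · simp [natDegree_C]

private lemma natDegree_A_pow_le (P : DiffPolyRing K δ) (b : K) (n : ℕ) :
    (Ap P b ^ n).natDegree ≤ n :=
  calc (Ap P b ^ n).natDegree ≤ n * (Ap P b).natDegree := natDegree_pow_le
    _ ≤ n * 1 := Nat.mul_le_mul_left _ (natDegree_A_le P b)
    _ = n := mul_one n

private lemma coeff_A_pow_self (P : DiffPolyRing K δ) (b : K) (n : ℕ) :
    (Ap P b ^ n).coeff n = P.t ^ n := by
  induction n with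
  | zero => simp
  | succ n ih =>
    rw [pow_succ']
    nth_rewrite 1 [Ap]
    rw [sub_mul, coeff_sub, mul_assoc, coeff_C_mul, coeff_X_mul, ih, coeff_C_mul,
      coeff_eq_zero_of_natDegree_lt (lt_of_le_of_lt (natDegree_A_pow_le P b n) (by omega)),
      mul_zero, sub_zero, pow_succ']

private lemma coeff_A_pow_zero (P : DiffPolyRing K δ) (b : K) (n : ℕ) :
    (Ap P b ^ n).coeff 0 = (-(P.ι b)) ^ n := by
  induction n with
  | zero => simp
  | succ n ih =>
    rw [pow_succ', mul_coeff_zero, ih, pow_succ']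
    congr 1
    rw [Ap, coeff_sub, coeff_C_mul, coeff_X_zero, mul_zero, coeff_C]
    simp
end DiffPolyHelpers

/-- over a commutative field of characteristic `p`,
`(t - b)^p = t^p - (b^p + δ^{p-1}(b))` in `K[t;δ]`. -/
theorem diffpoly_pow_char_p
    (K : Type*) [Field K] (p : ℕ) (hp : p.Prime) [CharP K p] (δ : K → K)
    (hadd : ∀ a b : K, δ (a + b) = δ a + δ b)
    (hmul : ∀ a b : K, δ (a * b) = a * δ b + δ a * b)
    (P : DiffPolyRing K δ) (b : K) :
    (P.t - P.ι b) ^ p = P.t ^ p - P.ι (b ^ p + δ^[p - 1] b) := by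
  have hp2 := hp.two_le
  have hpz : ((p : ℕ) : P.carrier) = 0 := by
    rw [← map_natCast P.ι, CharP.cast_eq_zero K p, map_zero]
  have hder := derivative_A_pow_prime P b hp hpz
  -- middle coefficients vanish
  have hmid : ∀ i, 1 ≤ i → i ≤ p - 2 → (Ap P b ^ p).coeff i = 0 := by
    intro i h1 h2
    have hco := coeff_derivative (Ap P b ^ p) (i - 1)
    rw [hder, coeff_C_mul, coeff_X_pow, if_neg (by omega : ¬ (i - 1 = p - 2)), mul_zero,
      ← Nat.cast_succ, show i - 1 + 1 = i by omega, show (i - 1).succ = i by omega] at hco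
    -- hco : 0 = (Ap P b ^ p).coeff i * (i : P.carrier)
    have hcop : Nat.gcd i p = 1 := by
      have : ¬ p ∣ i := by
        intro hdvd
        exact absurd (Nat.le_of_dvd (by omega) hdvd) (by omega)
      exact Nat.Coprime.gcd_eq_one (Nat.coprime_comm.mp (hp.coprime_iff_not_dvd.mpr this))
    have hbez := Nat.gcd_eq_gcd_ab i p
    rw [hcop] at hbez
    have hone : (1 : P.carrier) = (i : P.carrier) * ((Nat.gcdA i p : ℤ) : P.carrier) := by
      have hcast := congrArg (fun z : ℤ => (z : P.carrier)) hbez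
      push_cast at hcast
      rw [hpz, zero_mul, add_zero] at hcast
      exact hcast
    calc (Ap P b ^ p).coeff i = (Ap P b ^ p).coeff i * 1 := (mul_one _).symm
      _ = ((Ap P b ^ p).coeff i * (i : P.carrier)) * ((Nat.gcdA i p : ℤ) : P.carrier) := by
          rw [hone, ← mul_assoc]
      _ = 0 := by rw [← hco, zero_mul]
  -- coefficient p-1
  have hcp1 : (Ap P b ^ p).coeff (p-1) = - P.ι (δ^[p-1] b) := by
    have hco := coeff_derivative (Ap P b ^ p) (p-2)
    rw [hder, coeff_C_mul, coeff_X_pow, if_pos rfl, mul_one,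
      ← Nat.cast_succ, show p - 2 + 1 = p - 1 by omega, show (p - 2).succ = p - 1 by omega] at hco
    have hcast : (((p-1 : ℕ)) : P.carrier) = -1 := by
      rw [Nat.cast_sub hp.one_le, hpz, Nat.cast_one, zero_sub]
    rw [hcast, mul_neg_one] at hco
    rw [hco, neg_neg]
  -- coefficient 0
  have hc0 : (Ap P b ^ p).coeff 0 = - P.ι (b ^ p) := by
    rcases hp.eq_two_or_odd' with h2 | hodd
    · subst h2
      rw [coeff_A_pow_zero, neg_sq, ← map_pow]
      refine eq_neg_of_add_eq_zero_left ?_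
      rw [← two_mul, show ((2 : P.carrier)) = 0 from by exact_mod_cast hpz, zero_mul]
    · rw [coeff_A_pow_zero, hodd.neg_pow, ← map_pow]
  -- evaluation at X = 1
  let φ : Polynomial P.carrier →+* P.carrier :=
    eval₂RingHom' (RingHom.id P.carrier) 1 (fun a => Commute.one_right a)
  have hφC : ∀ a : P.carrier, φ (C a) = a := fun a => eval₂_C _ _
  have hφX : φ X = 1 := eval₂_X _ _
  have hφA : φ (Ap P b) = P.t - P.ι b := by
    rw [Ap, map_sub, map_mul, hφC, hφC, hφX, mul_one]
  have hdeg : (Ap P b ^ p).natDegree < p + 1 :=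
    lt_of_le_of_lt (natDegree_A_pow_le P b p) (by omega)
  have hsum : (P.t - P.ι b) ^ p = ∑ i ∈ Finset.range (p+1), (Ap P b ^ p).coeff i := by
    rw [← hφA, ← map_pow]
    conv_lhs => rw [(Ap P b ^ p).as_sum_range' (p+1) hdeg]
    rw [map_sum]
    refine Finset.sum_congr rfl fun i _ => ?_
    rw [← C_mul_X_pow_eq_monomial, map_mul, hφC, map_pow, hφX, one_pow, mul_one]
  have hsub : ∑ i ∈ Finset.range (p+1), (Ap P b ^ p).coeff i
      = (Ap P b ^ p).coeff 0 + ((Ap P b ^ p).coeff (p-1) + (Ap P b ^ p).coeff p) := by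
    rw [← Finset.sum_subset (show ({0, p-1, p} : Finset ℕ) ⊆ Finset.range (p+1) by
        intro i hi
        simp only [Finset.mem_insert, Finset.mem_singleton] at hi
        rw [Finset.mem_range]
        omega)
      (fun i hi hni => by
        simp only [Finset.mem_insert, Finset.mem_singleton, not_or] at hni
        rw [Finset.mem_range] at hi
        exact hmid i (by omega) (by omega))]
    rw [Finset.sum_insert (by simp; omega), Finset.sum_insert (by simp; omega),
      Finset.sum_singleton]
  rw [hsum, hsub, hc0, hcp1, coeff_A_pow_self, map_add]
  abel
end

section
/- Let D be a division ring with derivation δ, f ∈ D[t;δ] of degree m ≥ 1. If f is irreducible in D[t;δ] and S_f is finite-dimensional over the field F = Cent(δ) ∩ Z(D), then S_f = D[t;δ]/D[t;δ]f is a division algebra. Conversely, if S_f is a division algebra then f is irreducible. -/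
namespace DiffPolyRing

variable {D : Type*} [Ring D] {δ : D → D}

variable (P : DiffPolyRing D δ)

noncomputable def coeff (p : P.carrier) (i : ℕ) : D := P.rep p i

lemma rep_symm_single (i : ℕ) (a : D) :
    P.rep.symm (Finsupp.single i a) = P.ι a * P.t ^ i := by
  rw [P.rep_symm_apply, Finsupp.sum_single_index]
  simp

lemma rep_basis (i : ℕ) (a : D) : P.rep (P.ι a * P.t ^ i) = Finsupp.single i a := by
  rw [← rep_symm_single]; exact P.rep.apply_symm_apply _

lemma coeff_basis (i : ℕ) (a : D) (j : ℕ) :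
    P.coeff (P.ι a * P.t ^ i) j = if i = j then a else 0 := by
  rw [coeff, rep_basis]; exact Finsupp.single_apply

lemma coeff_add (x y : P.carrier) (j : ℕ) :
    P.coeff (x + y) j = P.coeff x j + P.coeff y j := by
  simp [coeff, map_add]

lemma coeff_zero (j : ℕ) : P.coeff 0 j = 0 := by simp [coeff]

lemma coeff_neg (x : P.carrier) (j : ℕ) : P.coeff (-x) j = - P.coeff x j := by
  simp [coeff, map_neg]

lemma eq_sum_coeff (x : P.carrier) :
    x = (P.rep x).sum fun i a => P.ι a * P.t ^ i := by
  conv_lhs => rw [← P.rep.symm_apply_apply x]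
  rw [P.rep_symm_apply]

lemma carrier_induction (Q : P.carrier → Prop) (h0 : Q 0)
    (ha : ∀ x y, Q x → Q y → Q (x + y))
    (hb : ∀ (i : ℕ) (a : D), Q (P.ι a * P.t ^ i)) : ∀ x, Q x := by
  intro x
  rw [P.eq_sum_coeff x]
  generalize P.rep x = c
  induction c using Finsupp.induction with
  | zero => simpa using h0
  | single_add i a c hia ha' ih =>
      rw [Finsupp.sum_add_index (by simp) (by intro i b₁ b₂ b₃; rw [map_add, add_mul])]
      refine ha _ _ ?_ ih
      rw [Finsupp.sum_single_index (by simp)]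
      exact hb i a

-- degree basics
lemma deg_eq_bot_iff (x : P.carrier) : P.deg x = ⊥ ↔ x = 0 := by
  rw [deg, Finset.max_eq_bot, Finsupp.support_eq_empty]
  exact ⟨fun h => by simpa using congrArg P.rep.symm h, fun h => by simp [h]⟩

lemma deg_zero : P.deg (0 : P.carrier) = ⊥ := (P.deg_eq_bot_iff 0).2 rfl

lemma coeff_eq_zero_of_deg_lt {x : P.carrier} {j : ℕ} (h : P.deg x < j) :
    P.coeff x j = 0 := by
  by_contra hc
  have : j ∈ (P.rep x).support := Finsupp.mem_support_iff.2 hc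
  exact absurd (Finset.le_max this) (not_le_of_gt h)

lemma le_deg_of_coeff_ne_zero {x : P.carrier} {i : ℕ} (h : P.coeff x i ≠ 0) :
    (i : WithBot ℕ) ≤ P.deg x :=
  Finset.le_max (Finsupp.mem_support_iff.2 h)

lemma coeff_ne_zero_of_deg_eq {x : P.carrier} {n : ℕ} (h : P.deg x = n) :
    P.coeff x n ≠ 0 :=
  Finsupp.mem_support_iff.1 (Finset.mem_of_max h)

lemma deg_natCast_or_bot (x : P.carrier) : x = 0 ∨ ∃ n : ℕ, P.deg x = n := by
  rcases eq_or_ne x 0 with h | h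
  · exact Or.inl h
  · right
    cases hd : P.deg x with
    | bot => exact absurd ((P.deg_eq_bot_iff x).1 hd) h
    | coe n => exact ⟨n, rfl⟩

lemma deg_lt_iff (x : P.carrier) (j : ℕ) :
    P.deg x < j ↔ ∀ i, j ≤ i → P.coeff x i = 0 := by
  constructor
  · intro h i hi
    exact P.coeff_eq_zero_of_deg_lt (lt_of_lt_of_le h (by exact_mod_cast hi))
  · intro h
    rcases P.deg_natCast_or_bot x with h0 | ⟨n, hn⟩
    · rw [h0, deg_zero]
      exact WithBot.bot_lt_coe j
    · rw [hn]
      have := P.coeff_ne_zero_of_deg_eq hn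
      by_contra hc
      push_neg at hc
      exact this (h n (by exact_mod_cast hc))

lemma deg_le_iff (x : P.carrier) (j : ℕ) :
    P.deg x ≤ j ↔ ∀ i, j < i → P.coeff x i = 0 := by
  constructor
  · intro h i hi
    by_contra hc
    have := le_trans (P.le_deg_of_coeff_ne_zero hc) h
    exact absurd hi (not_lt_of_ge (by exact_mod_cast this))
  · intro h
    rcases P.deg_natCast_or_bot x with h0 | ⟨n, hn⟩
    · rw [h0, deg_zero]; exact bot_le
    · rw [hn]
      have := P.coeff_ne_zero_of_deg_eq hn
      by_contra hc
      push_neg at hc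
      exact this (h n (by exact_mod_cast hc))

lemma deg_basis {a : D} (ha : a ≠ 0) (i : ℕ) : P.deg (P.ι a * P.t ^ i) = i := by
  rw [deg, rep_basis, Finsupp.support_single_ne_zero _ ha]
  rfl

lemma deg_add_le (x y : P.carrier) : P.deg (x + y) ≤ max (P.deg x) (P.deg y) := by
  rcases le_or_gt (P.deg (x+y)) ⊥ with h | h
  · exact le_trans h bot_le
  · rcases P.deg_natCast_or_bot (x+y) with h0 | ⟨n, hn⟩
    · rw [h0, deg_zero]; exact bot_le
    · rw [hn]
      by_contra hc
      push_neg at hc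
      rw [max_lt_iff] at hc
      have h1 := P.coeff_eq_zero_of_deg_lt hc.1
      have h2 := P.coeff_eq_zero_of_deg_lt hc.2
      have := P.coeff_ne_zero_of_deg_eq hn
      rw [coeff_add, h1, h2, add_zero] at this
      exact this rfl

lemma deg_neg (x : P.carrier) : P.deg (-x) = P.deg x := by
  unfold deg
  rw [map_neg]
  congr 1
  exact Finsupp.support_neg _

lemma deg_sub_le (x y : P.carrier) : P.deg (x - y) ≤ max (P.deg x) (P.deg y) := by
  rw [sub_eq_add_neg]
  simpa [P.deg_neg y] using P.deg_add_le x (-y)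


section Mul

lemma coeff_iota_mul (a : D) (x : P.carrier) (j : ℕ) :
    P.coeff (P.ι a * x) j = a * P.coeff x j := by
  induction x using P.carrier_induction with
  | h0 => simp [coeff_zero]
  | ha x y hx hy => rw [mul_add, coeff_add, coeff_add, hx, hy, mul_add]
  | hb i b =>
      rw [← mul_assoc, ← map_mul, coeff_basis, coeff_basis, mul_ite, mul_zero]

variable (hadd : ∀ a b : D, δ (a + b) = δ a + δ b)
include hadd

lemma delta_zero : δ 0 = 0 := by
  have := hadd 0 0
  rw [add_zero] at this
  exact right_eq_add.mp this

omit hadd in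
lemma t_mul_basis (a : D) (i : ℕ) :
    P.t * (P.ι a * P.t ^ i) = P.ι a * P.t ^ (i+1) + P.ι (δ a) * P.t ^ i := by
  rw [← mul_assoc, P.tcomm, add_mul, mul_assoc, ← pow_succ']

lemma coeff_t_mul_succ (x : P.carrier) (j : ℕ) :
    P.coeff (P.t * x) (j+1) = P.coeff x j + δ (P.coeff x (j+1)) := by
  induction x using P.carrier_induction with
  | h0 => simp [coeff_zero, delta_zero hadd]
  | ha x y hx hy =>
      rw [mul_add, coeff_add, coeff_add, coeff_add, hx, hy, hadd]
      abel
  | hb i b =>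
      rw [t_mul_basis, coeff_add, coeff_basis, coeff_basis, coeff_basis, coeff_basis]
      have : δ (if i = j + 1 then b else 0) = if i = j + 1 then δ b else 0 := by
        split <;> simp [delta_zero hadd]
      rw [this]
      by_cases h : i = j
      · subst h; simp
      · rw [if_neg (by omega), if_neg h, zero_add]

lemma deg_t_mul_le {x : P.carrier} {m : ℕ} (hx : P.deg x ≤ m) :
    P.deg (P.t * x) ≤ (m+1 : ℕ) := by
  rw [deg_le_iff] at hx ⊢
  intro i hi
  match i, hi with
  | (j+1), hi =>
      rw [coeff_t_mul_succ P hadd]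
      rw [hx j (by omega), hx (j+1) (by omega), delta_zero hadd, add_zero]

lemma coeff_t_mul_top {x : P.carrier} {m : ℕ} (hx : P.deg x ≤ m) :
    P.coeff (P.t * x) (m+1) = P.coeff x m := by
  rw [coeff_t_mul_succ P hadd, (P.deg_le_iff x m).1 hx (m+1) (by omega),
    delta_zero hadd, add_zero]

lemma basis_mul_bound (i : ℕ) (a : D) {y : P.carrier} {m : ℕ} (hy : P.deg y ≤ m) :
    P.deg ((P.ι a * P.t ^ i) * y) ≤ (i + m : ℕ) ∧
      P.coeff ((P.ι a * P.t ^ i) * y) (i + m) = a * P.coeff y m := by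
  induction i generalizing y m with
  | zero =>
      rw [pow_zero, mul_one]
      constructor
      · rw [deg_le_iff]
        intro j hj
        rw [coeff_iota_mul, (P.deg_le_iff y m).1 hy j (by omega), mul_zero]
      · rw [zero_add, coeff_iota_mul]
  | succ i ih =>
      have hrw : (P.ι a * P.t ^ (i+1)) * y = (P.ι a * P.t ^ i) * (P.t * y) := by
        rw [pow_succ, ← mul_assoc, mul_assoc (P.ι a * P.t ^ i)]
      have h1 := deg_t_mul_le P hadd hy
      have h2 := coeff_t_mul_top P hadd hy
      obtain ⟨hb, hc⟩ := ih (y := P.t * y) (m := m+1) h1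
      rw [hrw]
      constructor
      · have hE : i + (m + 1) = i + 1 + m := by omega
        rw [hE] at hb
        exact hb
      · have hE : i + 1 + m = i + (m + 1) := by omega
        rw [hE, hc, h2]

omit hadd in
lemma coeff_finsuppSum (c : ℕ →₀ D) (g : ℕ → D → P.carrier) (j : ℕ) :
    P.coeff (c.sum g) j = c.sum fun i a => P.coeff (g i a) j := by
  classical
  exact map_finsuppSum ((Finsupp.applyAddHom j).comp P.rep.toAddMonoidHom) c g

lemma mul_bound {x y : P.carrier} {n m : ℕ} (hx : P.deg x ≤ n) (hy : P.deg y ≤ m) :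
    P.deg (x * y) ≤ (n + m : ℕ) ∧
      P.coeff (x * y) (n + m) = P.coeff x n * P.coeff y m := by
  classical
  have hxy : x * y = (P.rep x).sum fun i a => (P.ι a * P.t ^ i) * y := by
    conv_lhs => rw [P.eq_sum_coeff x]
    rw [Finsupp.sum_mul]
  have hsupp : ∀ i ∈ (P.rep x).support, i ≤ n := by
    intro i hi
    by_contra hc
    exact Finsupp.mem_support_iff.1 hi ((P.deg_le_iff x n).1 hx i (by omega))
  constructor
  · rw [hxy, deg_le_iff]
    intro j hj
    rw [coeff_finsuppSum, Finsupp.sum]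
    refine Finset.sum_eq_zero fun i hi => ?_
    have hin := hsupp i hi
    have := (basis_mul_bound P hadd i (P.rep x i) hy).1
    exact (P.deg_le_iff _ _).1 this j (by omega)
  · rw [hxy, coeff_finsuppSum, Finsupp.sum]
    rw [Finset.sum_eq_single n]
    · rcases Finset.decidableMem n (P.rep x).support with hn | hn
      · exact (basis_mul_bound P hadd n (P.rep x n) hy).2
      · exact (basis_mul_bound P hadd n (P.rep x n) hy).2
    · intro i hi hne
      have hin : i < n := lt_of_le_of_ne (hsupp i hi) hne
      have := (basis_mul_bound P hadd i (P.rep x i) hy).1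
      exact (P.deg_le_iff _ _).1 this (n+m) (by omega)
    · intro hn
      have : P.coeff x n = 0 := by
        by_contra hc
        exact hn (Finsupp.mem_support_iff.2 hc)
      rw [coeff] at this ⊢
      rw [this]
      simp

end Mul


section DivRing

variable {D : Type*} [DivisionRing D] {δ : D → D} (P : DiffPolyRing D δ)
variable (hadd : ∀ a b : D, δ (a + b) = δ a + δ b)

omit hadd in
lemma deg_basis_le (a : D) (i : ℕ) : P.deg (P.ι a * P.t ^ i) ≤ (i : WithBot ℕ) := by
  rcases eq_or_ne a 0 with h | h
  · simp [h, deg_zero]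
  · rw [P.deg_basis h i]

omit hadd in
lemma deg_one : P.deg (1 : P.carrier) = 0 := by
  have : (1 : P.carrier) = P.ι 1 * P.t ^ 0 := by simp
  rw [this]
  exact P.deg_basis one_ne_zero 0

omit hadd in
lemma one_ne_zero' : (1 : P.carrier) ≠ 0 := by
  intro h
  have := P.deg_one
  rw [h, deg_zero] at this
  exact absurd this (by simp)

include hadd

lemma deg_mul {x y : P.carrier} {n m : ℕ} (hx : P.deg x = n) (hy : P.deg y = m) :
    P.deg (x * y) = ((n + m : ℕ) : WithBot ℕ) ∧
      P.coeff (x * y) (n + m) = P.coeff x n * P.coeff y m := by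
  obtain ⟨hle, hc⟩ := P.mul_bound hadd (le_of_eq hx) (le_of_eq hy)
  have hnz : P.coeff (x * y) (n + m) ≠ 0 := by
    rw [hc]
    exact mul_ne_zero (P.coeff_ne_zero_of_deg_eq hx) (P.coeff_ne_zero_of_deg_eq hy)
  exact ⟨le_antisymm hle (P.le_deg_of_coeff_ne_zero hnz), hc⟩

lemma mul_ne_zero' {x y : P.carrier} (hx : x ≠ 0) (hy : y ≠ 0) : x * y ≠ 0 := by
  rcases P.deg_natCast_or_bot x with h | ⟨n, hn⟩; · exact absurd h hx
  rcases P.deg_natCast_or_bot y with h | ⟨m, hm⟩; · exact absurd h hy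
  intro h
  have := (P.deg_mul hadd hn hm).1
  rw [h, deg_zero] at this
  exact absurd this.symm (by simp)

lemma isUnit_iff_deg_eq_zero (u : P.carrier) :
    IsUnit u ↔ P.deg u = (0 : ℕ) := by
  constructor
  · rintro ⟨⟨u', v, huv, hvu⟩, rfl⟩
    rcases P.deg_natCast_or_bot u' with h | ⟨n, hn⟩
    · exfalso; apply P.one_ne_zero'; rw [← huv, h, zero_mul]
    rcases P.deg_natCast_or_bot v with h | ⟨m, hm⟩
    · exfalso; apply P.one_ne_zero'; rw [← huv, h, mul_zero]
    have := (P.deg_mul hadd hn hm).1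
    rw [huv, P.deg_one] at this
    have hnm : n + m = 0 := by exact_mod_cast this.symm
    rw [hn, Nat.eq_zero_of_add_eq_zero_right hnm]
  · intro h
    have ha : ∀ i, 0 < i → P.coeff u i = 0 := (P.deg_le_iff u 0).1 (le_of_eq h)
    have hu : u = P.ι (P.coeff u 0) := by
      have : P.rep u = Finsupp.single 0 (P.coeff u 0) := by
        ext i
        rcases Nat.eq_zero_or_pos i with rfl | hi
        · simp [coeff]
        · have h2 := ha i hi
          rw [coeff] at h2
          rw [h2, Finsupp.single_apply, if_neg (by omega)]
      have := congrArg P.rep.symm this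
      rw [P.rep.symm_apply_apply, P.rep_symm_single] at this
      simpa using this
    have hne : P.coeff u 0 ≠ 0 := P.coeff_ne_zero_of_deg_eq h
    obtain ⟨a, hane, hua⟩ : ∃ a : D, a ≠ 0 ∧ u = P.ι a := ⟨_, hne, hu⟩
    rw [hua]
    refine ⟨⟨P.ι a, P.ι a⁻¹, ?_, ?_⟩, rfl⟩
    · rw [← map_mul, mul_inv_cancel₀ hane, map_one]
    · rw [← map_mul, inv_mul_cancel₀ hane, map_one]

omit hadd in
lemma deg_lt_of_le_of_coeff_eq_zero {x : P.carrier} {n : ℕ}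
    (h1 : P.deg x ≤ (n : WithBot ℕ)) (h2 : P.coeff x n = 0) : P.deg x < n := by
  rw [deg_lt_iff]
  intro i hi
  rcases eq_or_lt_of_le hi with rfl | hlt
  · exact h2
  · exact (P.deg_le_iff x n).1 h1 i hlt

/-- right division: a = q * b + r -/
lemma div_right {b : P.carrier} {m : ℕ} (hb : P.deg b = m) (a : P.carrier) :
    ∃ q r, a = q * b + r ∧ P.deg r < P.deg b := by
  have key : ∀ N : ℕ, ∀ a : P.carrier, P.deg a < N →
      ∃ q r, a = q * b + r ∧ P.deg r < P.deg b := by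
    intro N
    induction N using Nat.strong_induction_on with
    | _ N ih =>
      intro a ha
      rcases lt_or_ge (P.deg a) (P.deg b) with hlt | hge
      · exact ⟨0, a, by rw [zero_mul, zero_add], hlt⟩
      · rcases P.deg_natCast_or_bot a with rfl | ⟨n, hn⟩
        · exact ⟨0, 0, by rw [zero_mul, zero_add], by rw [deg_zero, hb]; exact WithBot.bot_lt_coe m⟩
        have hmn : m ≤ n := by
          rw [hb, hn] at hge; exact_mod_cast hge
        have hnN : n < N := by rw [hn] at ha; exact_mod_cast ha
        set q₀ : P.carrier := P.ι (P.coeff a n * (P.coeff b m)⁻¹) * P.t ^ (n - m) with hq₀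
        obtain ⟨hdle, hcoe⟩ := P.mul_bound hadd
          (P.deg_basis_le (P.coeff a n * (P.coeff b m)⁻¹) (n-m)) (le_of_eq hb)
        rw [Nat.sub_add_cancel hmn] at hdle hcoe
        rw [coeff_basis, if_pos rfl] at hcoe
        conv at hcoe => rhs; rw [mul_assoc, inv_mul_cancel₀ (P.coeff_ne_zero_of_deg_eq hb), mul_one]
        have hd : P.deg (a - q₀ * b) < (n : WithBot ℕ) := by
          refine P.deg_lt_of_le_of_coeff_eq_zero ?_ ?_
          · refine le_trans (P.deg_sub_le _ _) ?_
            rw [max_le_iff]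
            exact ⟨le_of_eq hn, hdle⟩
          · rw [coeff, map_sub, Finsupp.sub_apply]
            rw [coeff] at hcoe
            rw [hcoe]
            exact sub_self _
        obtain ⟨q', r', hqr, hr⟩ := ih n hnN (a - q₀ * b) hd
        refine ⟨q₀ + q', r', ?_, hr⟩
        have h5 := sub_eq_iff_eq_add'.mp hqr
        rw [h5, add_mul, add_assoc]
  rcases P.deg_natCast_or_bot a with rfl | ⟨n, hn⟩
  · exact ⟨0, 0, by rw [zero_mul, zero_add], by rw [deg_zero, hb]; exact WithBot.bot_lt_coe m⟩
  · exact key (n+1) a (by rw [hn]; exact_mod_cast Nat.lt_succ_self n)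

end DivRing


section DivRing2

variable {D : Type*} [DivisionRing D] {δ : D → D} (P : DiffPolyRing D δ)
variable (hadd : ∀ a b : D, δ (a + b) = δ a + δ b)
include hadd

/-- left division: a = b * q + r -/
lemma div_left {b : P.carrier} {m : ℕ} (hb : P.deg b = m) (a : P.carrier) :
    ∃ q r, a = b * q + r ∧ P.deg r < P.deg b := by
  have key : ∀ N : ℕ, ∀ a : P.carrier, P.deg a < N →
      ∃ q r, a = b * q + r ∧ P.deg r < P.deg b := by
    intro N
    induction N using Nat.strong_induction_on with
    | _ N ih =>
      intro a ha
      rcases lt_or_ge (P.deg a) (P.deg b) with hlt | hge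
      · exact ⟨0, a, by rw [mul_zero, zero_add], hlt⟩
      · rcases P.deg_natCast_or_bot a with rfl | ⟨n, hn⟩
        · exact ⟨0, 0, by rw [mul_zero, zero_add], by rw [deg_zero, hb]; exact WithBot.bot_lt_coe m⟩
        have hmn : m ≤ n := by
          rw [hb, hn] at hge; exact_mod_cast hge
        have hnN : n < N := by rw [hn] at ha; exact_mod_cast ha
        set q₀ : P.carrier := P.ι ((P.coeff b m)⁻¹ * P.coeff a n) * P.t ^ (n - m) with hq₀
        obtain ⟨hdle, hcoe⟩ := P.mul_bound hadd (le_of_eq hb)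
          (P.deg_basis_le ((P.coeff b m)⁻¹ * P.coeff a n) (n-m))
        rw [Nat.add_sub_cancel' hmn] at hdle hcoe
        rw [coeff_basis, if_pos rfl] at hcoe
        conv at hcoe => rhs; rw [← mul_assoc, mul_inv_cancel₀ (P.coeff_ne_zero_of_deg_eq hb), one_mul]
        have hd : P.deg (a - b * q₀) < (n : WithBot ℕ) := by
          refine P.deg_lt_of_le_of_coeff_eq_zero ?_ ?_
          · refine le_trans (P.deg_sub_le _ _) ?_
            rw [max_le_iff]
            exact ⟨le_of_eq hn, hdle⟩
          · rw [coeff, map_sub, Finsupp.sub_apply]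
            rw [coeff] at hcoe
            rw [hcoe]
            exact sub_self _
        obtain ⟨q', r', hqr, hr⟩ := ih n hnN (a - b * q₀) hd
        refine ⟨q₀ + q', r', ?_, hr⟩
        have h5 := sub_eq_iff_eq_add'.mp hqr
        rw [h5, mul_add, add_assoc]
  rcases P.deg_natCast_or_bot a with rfl | ⟨n, hn⟩
  · exact ⟨0, 0, by rw [mul_zero, zero_add], by rw [deg_zero, hb]; exact WithBot.bot_lt_coe m⟩
  · exact key (n+1) a (by rw [hn]; exact_mod_cast Nat.lt_succ_self n)

omit hadd in
lemma deg_lt_deg_of_mul_left {x q f : P.carrier} {mf : ℕ} (hf : P.deg f = mf)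
    (hadd : ∀ a b : D, δ (a + b) = δ a + δ b)
    (hq : q ≠ 0) (hx : x = q * f) : ¬ (P.deg x < P.deg f) := by
  rcases P.deg_natCast_or_bot q with h | ⟨k, hk⟩; · exact absurd h hq
  have := (P.deg_mul hadd hk hf).1
  rw [← hx] at this
  intro hlt
  rw [this, hf] at hlt
  have : k + mf < mf := by exact_mod_cast hlt
  omega

lemma rem_unique {f : P.carrier} {mf : ℕ} (hf : P.deg f = mf)
    {q q' r r' : P.carrier} (h : q * f + r = q' * f + r')
    (hr : P.deg r < P.deg f) (hr' : P.deg r' < P.deg f) : r = r' := by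
  by_contra hne
  have h2 : (q - q') * f = r' - r := by
    rw [sub_mul, sub_eq_sub_iff_add_eq_add, h, add_comm]
  have hsub : r' - r ≠ 0 := sub_ne_zero.mpr fun hh => hne hh.symm
  have hqne : q - q' ≠ 0 := by
    intro h0
    rw [h0, zero_mul] at h2
    exact hsub h2.symm
  refine P.deg_lt_deg_of_mul_left hf hadd hqne h2.symm ?_
  exact lt_of_le_of_lt (P.deg_sub_le r' r) (max_lt hr' hr)

variable {f : P.carrier} {mf : ℕ} (hf : P.deg f = mf)
variable (modf : P.carrier → P.carrier)
variable (hmod : ∀ g : P.carrier, P.deg (modf g) < P.deg f ∧ ∃ q, g = q * f + modf g)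
include hf hmod

lemma modf_eq {x q r : P.carrier} (hx : x = q * f + r) (hr : P.deg r < P.deg f) :
    modf x = r := by
  obtain ⟨hdeg, q₀, hq₀⟩ := hmod x
  refine P.rem_unique hadd hf (q := q₀) (q' := q) ?_ hdeg hr
  rw [← hq₀, ← hx]

lemma modf_small {x : P.carrier} (hx : P.deg x < P.deg f) : modf x = x :=
  P.modf_eq hadd hf modf hmod (by rw [zero_mul, zero_add]) hx

omit hadd hmod hf in
lemma bot_lt_deg_f (hm : (1 : WithBot ℕ) ≤ P.deg f) : (⊥ : WithBot ℕ) < P.deg f :=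
  lt_of_lt_of_le (by exact WithBot.bot_lt_coe 1) hm

lemma modf_zero (hm : (1 : WithBot ℕ) ≤ P.deg f) : modf 0 = 0 :=
  P.modf_small hadd hf modf hmod (by rw [deg_zero]; exact P.bot_lt_deg_f hm)

lemma modf_f (hm : (1 : WithBot ℕ) ≤ P.deg f) : modf f = 0 :=
  P.modf_eq hadd hf modf hmod (q := 1) (r := 0) (by rw [one_mul, add_zero])
    (by rw [deg_zero]; exact P.bot_lt_deg_f hm)

lemma modf_add (x y : P.carrier) : modf (x + y) = modf x + modf y := by
  obtain ⟨hdx, qx, hqx⟩ := hmod x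
  obtain ⟨hdy, qy, hqy⟩ := hmod y
  refine P.modf_eq hadd hf modf hmod (q := qx + qy) ?_ ?_
  · rw [add_mul]
    conv_lhs => rw [hqx, hqy]
    abel
  · exact lt_of_le_of_lt (P.deg_add_le _ _) (max_lt hdx hdy)

omit hadd hf hmod in
lemma deg_iota_mul_le (a : D) (x : P.carrier) : P.deg (P.ι a * x) ≤ P.deg x := by
  rcases P.deg_natCast_or_bot x with rfl | ⟨n, hn⟩
  · rw [mul_zero]
  · rw [hn, deg_le_iff]
    intro i hi
    rw [coeff_iota_mul, (P.deg_le_iff x n).1 (le_of_eq hn) i hi, mul_zero]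

lemma modf_iota_mul (a : D) (x : P.carrier) : modf (P.ι a * x) = P.ι a * modf x := by
  obtain ⟨hdx, qx, hqx⟩ := hmod x
  refine P.modf_eq hadd hf modf hmod (q := P.ι a * qx) ?_ ?_
  · conv_lhs => rw [hqx]
    rw [mul_add, mul_assoc]
  · exact lt_of_le_of_lt (P.deg_iota_mul_le a (modf x)) hdx

lemma modf_neg (x : P.carrier) : modf (-x) = - modf x := by
  obtain ⟨hdx, qx, hqx⟩ := hmod x
  refine P.modf_eq hadd hf modf hmod (q := -qx) ?_ ?_
  · rw [neg_mul, ← neg_add]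
    exact congrArg Neg.neg hqx
  · rw [deg_neg]; exact hdx

lemma modf_sub (x y : P.carrier) : modf (x - y) = modf x - modf y := by
  rw [sub_eq_add_neg, P.modf_add hadd hf modf hmod, P.modf_neg hadd hf modf hmod,
    sub_eq_add_neg]

end DivRing2

section Central

variable {D : Type*} [Ring D] {δ : D → D} (P : DiffPolyRing D δ)

lemma t_pow_comm {c : D} (hc0 : δ c = 0) (i : ℕ) :
    P.t ^ i * P.ι c = P.ι c * P.t ^ i := by
  induction i with
  | zero => simp
  | succ i ih =>
      rw [pow_succ, mul_assoc, P.tcomm, hc0, map_zero, add_zero, ← mul_assoc, ih,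
        mul_assoc, ← pow_succ]

lemma iota_central {c : D} (hc0 : δ c = 0) (hcc : ∀ x : D, c * x = x * c)
    (x : P.carrier) : P.ι c * x = x * P.ι c := by
  induction x using P.carrier_induction with
  | h0 => rw [mul_zero, zero_mul]
  | ha x y hx hy => rw [mul_add, add_mul, hx, hy]
  | hb i a =>
      rw [← mul_assoc, ← map_mul, hcc, map_mul, mul_assoc, ← t_pow_comm P hc0, ← mul_assoc]

lemma eq_sum_fin {x : P.carrier} {n : ℕ} (hx : P.deg x < (n : WithBot ℕ)) :
    x = ∑ i : Fin n, P.ι (P.coeff x i) * P.t ^ (i : ℕ) := by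
  classical
  have hsupp : (P.rep x).support ⊆ Finset.range n := by
    intro i hi
    rw [Finset.mem_range]
    by_contra hc
    exact Finsupp.mem_support_iff.1 hi ((P.deg_lt_iff x n).1 hx i (by omega))
  conv_lhs => rw [P.eq_sum_coeff x]
  rw [Finsupp.sum, Finset.sum_subset hsupp (by
    intro i _ hi
    rw [Finsupp.notMem_support_iff.1 hi, map_zero, zero_mul])]
  rw [Finset.sum_range fun i => P.ι ((P.rep x) i) * P.t ^ i]
  rfl

lemma coeff_finsetSum {n : ℕ} (g : Fin n → P.carrier) (j : ℕ) :
    P.coeff (∑ i, g i) j = ∑ i, P.coeff (g i) j := by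
  classical
  exact map_sum ((Finsupp.applyAddHom j).comp P.rep.toAddMonoidHom) g Finset.univ

lemma deg_fin_sum_lt {n m : ℕ} (g : Fin n → P.carrier)
    (hg : ∀ i, P.deg (g i) < (m : WithBot ℕ)) :
    P.deg (∑ i, g i) < (m : WithBot ℕ) := by
  rw [deg_lt_iff]
  intro j hj
  rw [coeff_finsetSum]
  exact Finset.sum_eq_zero fun i _ => (P.deg_lt_iff (g i) m).1 (hg i) j hj

end Central


section NZD

variable {D : Type*} [DivisionRing D] {δ : D → D} (P : DiffPolyRing D δ)
variable (hadd : ∀ a b : D, δ (a + b) = δ a + δ b)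
include hadd

lemma exists_min_gen (K : Set P.carrier)
    (hne : ∃ x ∈ K, x ≠ 0)
    (hcl : ∀ x ∈ K, ∀ s : P.carrier, ∀ y ∈ K, x - s * y ∈ K) :
    ∃ c ∈ K, c ≠ 0 ∧ ∀ x ∈ K, ∃ s, x = s * c := by
  classical
  have hS : ∃ n : ℕ, ∃ x ∈ K, x ≠ 0 ∧ P.deg x = (n : WithBot ℕ) := by
    obtain ⟨x, hxK, hx⟩ := hne
    rcases P.deg_natCast_or_bot x with h | ⟨n, hn⟩
    · exact absurd h hx
    · exact ⟨n, x, hxK, hx, hn⟩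
  set nc := Nat.find hS with hnc
  obtain ⟨c, hcK, hcne, hcd⟩ := Nat.find_spec hS
  refine ⟨c, hcK, hcne, ?_⟩
  intro x hxK
  obtain ⟨s, r, hsr, hr⟩ := P.div_right hadd hcd x
  have hrK : r ∈ K := by
    have : r = x - s * c := by rw [hsr]; abel
    rw [this]
    exact hcl x hxK s c hcK
  have hr0 : r = 0 := by
    by_contra hr0
    rcases P.deg_natCast_or_bot r with h | ⟨nr, hnr⟩
    · exact hr0 h
    have hlt : nr < nc := by
      rw [hnr, hcd] at hr
      exact_mod_cast hr
    exact Nat.find_min hS hlt ⟨r, hrK, hr0, hnr⟩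
  rw [hr0, add_zero] at hsr
  exact ⟨s, hsr⟩

variable {f : P.carrier} {mf : ℕ} (hf : P.deg f = mf)
variable (hm : (1 : WithBot ℕ) ≤ P.deg f)
variable (modf : P.carrier → P.carrier)
variable (hmod : ∀ g : P.carrier, P.deg (modf g) < P.deg f ∧ ∃ q, g = q * f + modf g)
include hf hm hmod

omit hm in
lemma no_zero_divisors
    (hirr : (¬ IsUnit f) ∧ ∀ g h : P.carrier, f = g * h → IsUnit g ∨ IsUnit h)
    {a b : P.carrier} (ha : a ≠ 0) (hb : b ≠ 0)
    (hda : P.deg a < P.deg f) (hdb : P.deg b < P.deg f)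
    {Q : P.carrier} (hab : a * b = Q * f) : False := by
  classical
  have hfne : f ≠ 0 := by
    intro h
    rw [h, deg_zero] at hf
    exact absurd hf.symm (by simp)
  -- the left "annihilator" set K
  set K : Set P.carrier := {x | ∃ q, x * b = q * f} with hKdef
  have hKcl : ∀ x ∈ K, ∀ s : P.carrier, ∀ y ∈ K, x - s * y ∈ K := by
    rintro x ⟨qx, hqx⟩ s y ⟨qy, hqy⟩
    exact ⟨qx - s * qy, by rw [sub_mul, sub_mul, hqx, mul_assoc, hqy, mul_assoc]⟩
  obtain ⟨c, hcK, hcne, hcgen⟩ := P.exists_min_gen hadd K ⟨a, ⟨Q, hab⟩, ha⟩ hKcl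
  obtain ⟨qc, hqc⟩ := hcK
  have h1K : (1 : P.carrier) ∉ K := by
    rintro ⟨q, hq⟩
    rw [one_mul] at hq
    have hqne : q ≠ 0 := by rintro rfl; rw [zero_mul] at hq; exact hb hq
    exact P.deg_lt_deg_of_mul_left hf hadd hqne hq hdb
  have hcnu : ¬ IsUnit c := by
    intro hcu
    obtain ⟨cv, hvc⟩ : ∃ cv, cv * c = 1 :=
      ⟨↑hcu.unit⁻¹, hcu.val_inv_mul⟩
    refine h1K ⟨cv * qc, ?_⟩
    show (1 : P.carrier) * b = (cv * qc) * f
    rw [one_mul, ← one_mul b, ← hvc, mul_assoc, hqc, ← mul_assoc]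
  -- the "ideal" I = Rb + Rf, with a generator d
  set I : Set P.carrier := {x | ∃ u v, x = u * b + v * f} with hIdef
  have hIcl : ∀ x ∈ I, ∀ s : P.carrier, ∀ y ∈ I, x - s * y ∈ I := by
    rintro x ⟨u1, v1, h1⟩ s y ⟨u2, v2, h2⟩
    refine ⟨u1 - s * u2, v1 - s * v2, ?_⟩
    rw [h1, h2, sub_mul, sub_mul, mul_add, mul_assoc, mul_assoc]
    abel
  have hfI : f ∈ I := ⟨0, 1, by rw [zero_mul, one_mul, zero_add]⟩
  obtain ⟨d, hdI, hdne, hdgen⟩ := P.exists_min_gen hadd I ⟨f, hfI, hfne⟩ hIcl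
  obtain ⟨e, he⟩ := hdgen f hfI
  obtain ⟨u, v, h1⟩ : ∃ u v : P.carrier, (1 : P.carrier) = u * b + v * f := by
    rcases hirr.2 e d he with heu | hdu
    · -- e unit : then b ∈ Rf, contradiction
      exfalso
      obtain ⟨ev, hve⟩ : ∃ ev, ev * e = 1 :=
        ⟨↑heu.unit⁻¹, heu.val_inv_mul⟩
      have hd : d = ev * f := by rw [he, ← mul_assoc, hve, one_mul]
      obtain ⟨s, hs⟩ := hdgen b ⟨1, 0, by rw [one_mul, zero_mul, add_zero]⟩
      have hbf : b = (s * ev) * f := by rw [hs, hd, mul_assoc]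
      have hsne : s * ev ≠ 0 := by
        intro h0
        rw [h0, zero_mul] at hbf
        exact hb hbf
      exact P.deg_lt_deg_of_mul_left hf hadd hsne hbf hdb
    · obtain ⟨dv, hvd⟩ : ∃ dv, dv * d = 1 :=
        ⟨↑hdu.unit⁻¹, hdu.val_inv_mul⟩
      obtain ⟨u0, v0, hd0⟩ := hdI
      refine ⟨dv * u0, dv * v0, ?_⟩
      rw [← hvd]
      conv_lhs => rw [hd0]
      rw [mul_add, mul_assoc, mul_assoc]
  -- degrees
  obtain ⟨nc, hncd⟩ : ∃ n : ℕ, P.deg c = (n : WithBot ℕ) := by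
    rcases P.deg_natCast_or_bot c with h | h
    · exact absurd h hcne
    · exact h
  -- the surjective D-linear map (Fin nc → D) → (Fin mf → D)
  have hmain : mf ≤ nc := by
    set Φ : (Fin nc → D) →ₗ[D] (Fin mf → D) :=
      { toFun := fun w j => P.coeff (modf ((∑ i, P.ι (w i) * P.t ^ (i : ℕ)) * b)) j
        map_add' := by
          intro w w'
          funext j
          beta_reduce
          have hsum : (∑ i : Fin nc, P.ι ((w + w') i) * P.t ^ (i : ℕ)) =
              (∑ i : Fin nc, P.ι (w i) * P.t ^ (i : ℕ)) +
              (∑ i : Fin nc, P.ι (w' i) * P.t ^ (i : ℕ)) := by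
            rw [← Finset.sum_add_distrib]
            refine Finset.sum_congr rfl fun i _ => ?_
            rw [Pi.add_apply, map_add, add_mul]
          rw [hsum, add_mul, P.modf_add hadd hf modf hmod, coeff_add]
          rfl
        map_smul' := by
          intro dd w
          funext j
          simp only [RingHom.id_apply, Pi.smul_apply, smul_eq_mul, AddHom.coe_mk]
          beta_reduce
          have hsum : (∑ i : Fin nc, P.ι (dd * w i) * P.t ^ (i : ℕ)) =
              P.ι dd * (∑ i : Fin nc, P.ι (w i) * P.t ^ (i : ℕ)) := by
            rw [Finset.mul_sum]
            refine Finset.sum_congr rfl fun i _ => ?_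
            rw [map_mul, mul_assoc]
          rw [hsum, mul_assoc, P.modf_iota_mul hadd hf modf hmod, coeff_iota_mul] } with hΦ
    have hsurj : Function.Surjective Φ := by
      intro w
      set k' : P.carrier := ∑ j : Fin mf, P.ι (w j) * P.t ^ (j : ℕ) with hk'def
      have hk'd : P.deg k' < P.deg f := by
        rw [hf]
        refine P.deg_fin_sum_lt _ fun j => ?_
        exact lt_of_le_of_lt (P.deg_basis_le _ _) (by exact_mod_cast j.2)
      have hxb : (k' * u) * b = (-(k' * v)) * f + k' := by
        have hub : u * b = 1 - v * f := by rw [eq_sub_iff_add_eq, ← h1]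
        rw [mul_assoc, hub, mul_sub, mul_one, neg_mul, ← mul_assoc]
        abel
      obtain ⟨s, r, hsr, hrd⟩ := P.div_right hadd hncd (k' * u)
      have hrb : r * b = (-(k' * v) - s * qc) * f + k' := by
        have hr' : r = k' * u - s * c := by rw [hsr]; abel
        rw [hr', sub_mul, hxb, mul_assoc, hqc, ← mul_assoc, sub_mul]
        abel
      have hmodrb : modf (r * b) = k' := P.modf_eq hadd hf modf hmod hrb hk'd
      refine ⟨fun i => P.coeff r i, ?_⟩
      have hrsum : (∑ i : Fin nc, P.ι (P.coeff r (i : ℕ)) * P.t ^ (i : ℕ)) = r := by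
        rw [← P.eq_sum_fin (hncd ▸ hrd)]
      funext j
      show P.coeff (modf ((∑ i : Fin nc, P.ι (P.coeff r (i : ℕ)) * P.t ^ (i : ℕ)) * b)) j = w j
      rw [hrsum, hmodrb, hk'def, coeff_finsetSum]
      rw [Finset.sum_eq_single j]
      · rw [coeff_basis, if_pos rfl]
      · intro i _ hine
        rw [coeff_basis, if_neg (by simpa [Fin.val_eq_val] using hine)]
      · intro h
        exact absurd (Finset.mem_univ j) h
    have hrank := LinearMap.rank_le_of_surjective Φ hsurj
    rw [rank_fin_fun, rank_fin_fun] at hrank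
    exact_mod_cast hrank
  -- conclude
  obtain ⟨s, hs⟩ := hcgen a ⟨Q, hab⟩
  have hsne : s ≠ 0 := by rintro rfl; rw [zero_mul] at hs; exact ha hs
  obtain ⟨ns, hnsd⟩ : ∃ n : ℕ, P.deg s = (n : WithBot ℕ) := by
    rcases P.deg_natCast_or_bot s with h | h
    · exact absurd h hsne
    · exact h
  have hda' := (P.deg_mul hadd hnsd hncd).1
  rw [← hs] at hda'
  rw [hda', hf] at hda
  have : ns + nc < mf := by exact_mod_cast hda
  omega

end NZD


section Cent

variable {D : Type*} [DivisionRing D] {δ : D → D}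
variable (hadd : ∀ a b : D, δ (a + b) = δ a + δ b)
variable (hmul : ∀ a b : D, δ (a * b) = a * δ b + δ a * b)

def centSubfield : Subfield D where
  carrier := {c | δ c = 0 ∧ ∀ x : D, c * x = x * c}
  mul_mem' := by
    rintro a b ⟨ha0, hac⟩ ⟨hb0, hbc⟩
    refine ⟨by rw [hmul, ha0, hb0, mul_zero, zero_mul, add_zero], fun x => ?_⟩
    rw [mul_assoc, hbc, ← mul_assoc, hac, mul_assoc]
  one_mem' := by
    refine ⟨?_, fun x => by rw [one_mul, mul_one]⟩
    have h := hmul 1 1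
    simp only [mul_one, one_mul] at h
    exact (left_eq_add.mp h)
  add_mem' := by
    rintro a b ⟨ha0, hac⟩ ⟨hb0, hbc⟩
    exact ⟨by rw [hadd, ha0, hb0, add_zero], fun x => by rw [add_mul, mul_add, hac, hbc]⟩
  zero_mem' := ⟨DiffPolyRing.delta_zero hadd, fun x => by rw [zero_mul, mul_zero]⟩
  neg_mem' := by
    rintro a ⟨ha0, hac⟩
    refine ⟨?_, fun x => by rw [neg_mul, mul_neg, hac]⟩
    have h := hadd (-a) a
    rw [neg_add_cancel, DiffPolyRing.delta_zero hadd, ha0, add_zero] at h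
    exact h.symm
  inv_mem' := by
    rintro a ⟨ha0, hac⟩
    rcases eq_or_ne a 0 with rfl | ha
    · rw [inv_zero]
      exact ⟨ha0, hac⟩
    · constructor
      · have h := hmul a a⁻¹
        rw [mul_inv_cancel₀ ha, ha0, zero_mul, add_zero] at h
        have h1 : δ (1 : D) = 0 := by
          have h2 := hmul 1 1
          simp only [mul_one, one_mul] at h2
          exact (left_eq_add.mp h2)
        rw [h1] at h
        rcases mul_eq_zero.mp h.symm with h | h
        · exact absurd h ha
        · exact h
      · intro x
        rw [eq_mul_inv_iff_mul_eq₀ ha, mul_assoc, ← hac, ← mul_assoc,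
          inv_mul_cancel₀ ha, one_mul]

end Cent

end DiffPolyRing

open DiffPolyRing

lemma mem_centSubfield {D : Type*} [DivisionRing D] {δ : D → D}
    (hadd : ∀ a b : D, δ (a + b) = δ a + δ b)
    (hmul : ∀ a b : D, δ (a * b) = a * δ b + δ a * b) {c : D} :
    c ∈ centSubfield hadd hmul ↔ δ c = 0 ∧ ∀ x : D, c * x = x * c := Iff.rfl



/-- if `f` is irreducible and `S_f` is finite-dimensional over
`F = Cent(δ) ∩ Z(D)` then `S_f` is a division algebra; conversely if `S_f` is a
division algebra then `f` is irreducible. -/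
theorem Sf_division_iff_irreducible
    (D : Type*) [DivisionRing D] (δ : D → D)
    (hadd : ∀ a b : D, δ (a + b) = δ a + δ b)
    (hmul : ∀ a b : D, δ (a * b) = a * δ b + δ a * b)
    (P : DiffPolyRing D δ) (f : P.carrier) (hm : (1 : WithBot ℕ) ≤ P.deg f)
    (modf : P.carrier → P.carrier)
    (hmod : ∀ g : P.carrier, P.deg (modf g) < P.deg f ∧ ∃ q, g = q * f + modf g) :
    (((¬ IsUnit f) ∧ ∀ g h : P.carrier, f = g * h → IsUnit g ∨ IsUnit h) →
      (∃ (n : ℕ) (b : Fin n → P.carrier), ∀ g : P.carrier, P.deg g < P.deg f →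
        ∃ c : Fin n → D, (∀ i, δ (c i) = 0 ∧ ∀ x : D, c i * x = x * c i) ∧
          g = ∑ i, P.ι (c i) * b i) →
      (∀ g : P.carrier, P.deg g < P.deg f → g ≠ 0 →
        ∀ k : P.carrier, P.deg k < P.deg f →
          (∃! h : P.carrier, P.deg h < P.deg f ∧ modf (g * h) = k) ∧
          (∃! h : P.carrier, P.deg h < P.deg f ∧ modf (h * g) = k))) ∧
    ((∀ g : P.carrier, P.deg g < P.deg f → g ≠ 0 →
        ∀ k : P.carrier, P.deg k < P.deg f →
          (∃! h : P.carrier, P.deg h < P.deg f ∧ modf (g * h) = k) ∧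
          (∃! h : P.carrier, P.deg h < P.deg f ∧ modf (h * g) = k)) →
      ((¬ IsUnit f) ∧ ∀ g h : P.carrier, f = g * h → IsUnit g ∨ IsUnit h)) := by
  classical
  obtain ⟨mf, hf⟩ : ∃ n : ℕ, P.deg f = (n : WithBot ℕ) := by
    rcases P.deg_natCast_or_bot f with rfl | h
    · rw [DiffPolyRing.deg_zero] at hm
      exact absurd hm (by simp)
    · exact h
  have hfne : f ≠ 0 := by
    intro h
    rw [h, DiffPolyRing.deg_zero] at hf
    exact absurd hf.symm (by simp)
  constructor
  · -- irreducible + finite dimensional → division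
    intro hirr hfd g hdg hgne k hdk
    set K := centSubfield hadd hmul with hK
    letI : SMul K P.carrier := ⟨fun c x => P.ι c.1 * x⟩
    letI : Module K P.carrier := Module.ofMinimalAxioms
      (fun r x y => mul_add _ _ _)
      (fun r s x => by
        show P.ι ((r : D) + (s : D)) * x = P.ι (r : D) * x + P.ι (s : D) * x
        rw [map_add, add_mul])
      (fun r s x => by
        show P.ι ((r : D) * (s : D)) * x = P.ι (r : D) * (P.ι (s : D) * x)
        rw [map_mul, mul_assoc])
      (fun x => by show P.ι (1 : D) * x = x; rw [map_one, one_mul])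
    set Wf : Submodule K P.carrier :=
      { carrier := {x | P.deg x < P.deg f}
        add_mem' := fun {x y} hx hy => lt_of_le_of_lt (P.deg_add_le x y) (max_lt hx hy)
        zero_mem' := by
          show P.deg 0 < P.deg f
          rw [DiffPolyRing.deg_zero]
          exact P.bot_lt_deg_f hm
        smul_mem' := by
          intro c x hx
          exact lt_of_le_of_lt (P.deg_iota_mul_le (c : D) x) hx } with hWf
    have memWf : ∀ x : P.carrier, (x ∈ Wf ↔ P.deg x < P.deg f) := fun x => Iff.rfl
    -- finite dimensionality
    obtain ⟨n, bb, hspan⟩ := hfd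
    have hWfle : Wf ≤ Submodule.span K (Set.range fun i => modf (bb i)) := by
      intro x hx
      obtain ⟨cc, hccF, hxeq⟩ := hspan x hx
      have hmodx : modf x = x := P.modf_small hadd hf modf hmod hx
      let mh : P.carrier →+ P.carrier :=
        AddMonoidHom.mk' modf (P.modf_add hadd hf modf hmod)
      have hxs : x = ∑ i, P.ι (cc i) * modf (bb i) := by
        calc x = modf x := hmodx.symm
          _ = modf (∑ i, P.ι (cc i) * bb i) := by rw [← hxeq]
          _ = ∑ i, modf (P.ι (cc i) * bb i) := map_sum mh _ _
          _ = ∑ i, P.ι (cc i) * modf (bb i) :=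
              Finset.sum_congr rfl fun i _ => P.modf_iota_mul hadd hf modf hmod _ _
      rw [hxs]
      refine Submodule.sum_mem _ fun i _ => ?_
      have hmem : cc i ∈ K := (mem_centSubfield hadd hmul).2 ⟨(hccF i).1, (hccF i).2⟩
      have : P.ι (cc i) * modf (bb i) = (⟨cc i, hmem⟩ : K) • modf (bb i) := rfl
      rw [this]
      exact Submodule.smul_mem _ _ (Submodule.subset_span ⟨i, rfl⟩)
    haveI hfin1 : FiniteDimensional K
        (Submodule.span K (Set.range fun i => modf (bb i))) :=
      FiniteDimensional.span_of_finite K (Set.finite_range _)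
    haveI hfin : FiniteDimensional K Wf := Submodule.finiteDimensional_of_le hWfle
    -- the two multiplication maps
    set L : Wf →ₗ[K] Wf :=
      { toFun := fun x => ⟨modf (g * x.1), (hmod _).1⟩
        map_add' := by
          intro x y
          apply Subtype.ext
          show modf (g * (x.1 + y.1)) = modf (g * x.1) + modf (g * y.1)
          rw [mul_add, P.modf_add hadd hf modf hmod]
        map_smul' := by
          intro c x
          apply Subtype.ext
          show modf (g * (P.ι (c : D) * x.1)) = P.ι (c : D) * modf (g * x.1)
          obtain ⟨hc0, hcc⟩ := (mem_centSubfield hadd hmul).1 c.2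
          rw [← mul_assoc, ← P.iota_central hc0 hcc g, mul_assoc,
            P.modf_iota_mul hadd hf modf hmod] } with hL
    set Rm : Wf →ₗ[K] Wf :=
      { toFun := fun x => ⟨modf (x.1 * g), (hmod _).1⟩
        map_add' := by
          intro x y
          apply Subtype.ext
          show modf ((x.1 + y.1) * g) = modf (x.1 * g) + modf (y.1 * g)
          rw [add_mul, P.modf_add hadd hf modf hmod]
        map_smul' := by
          intro c x
          apply Subtype.ext
          show modf ((P.ι (c : D) * x.1) * g) = P.ι (c : D) * modf (x.1 * g)
          rw [mul_assoc, P.modf_iota_mul hadd hf modf hmod] } with hRm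
    have hLinj : Function.Injective L := by
      intro x y hxy
      have h1 : modf (g * x.1) = modf (g * y.1) := congrArg Subtype.val hxy
      by_contra hne
      have hsubne : x.1 - y.1 ≠ 0 := sub_ne_zero.mpr fun hh => hne (Subtype.ext hh)
      have hegs : modf (g * (x.1 - y.1)) = 0 := by
        rw [mul_sub, P.modf_sub hadd hf modf hmod, h1, sub_self]
      obtain ⟨q, hq⟩ := (hmod (g * (x.1 - y.1))).2
      rw [hegs, add_zero] at hq
      exact P.no_zero_divisors hadd hf modf hmod hirr hgne hsubne hdg
        (lt_of_le_of_lt (P.deg_sub_le x.1 y.1) (max_lt x.2 y.2)) hq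
    have hRinj : Function.Injective Rm := by
      intro x y hxy
      have h1 : modf (x.1 * g) = modf (y.1 * g) := congrArg Subtype.val hxy
      by_contra hne
      have hsubne : x.1 - y.1 ≠ 0 := sub_ne_zero.mpr fun hh => hne (Subtype.ext hh)
      have hegs : modf ((x.1 - y.1) * g) = 0 := by
        rw [sub_mul, P.modf_sub hadd hf modf hmod, h1, sub_self]
      obtain ⟨q, hq⟩ := (hmod ((x.1 - y.1) * g)).2
      rw [hegs, add_zero] at hq
      exact P.no_zero_divisors hadd hf modf hmod hirr hsubne hgne
        (lt_of_le_of_lt (P.deg_sub_le x.1 y.1) (max_lt x.2 y.2)) hdg hq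
    have hLsurj := LinearMap.injective_iff_surjective.mp hLinj
    have hRsurj := LinearMap.injective_iff_surjective.mp hRinj
    constructor
    · obtain ⟨h', hh'⟩ := hLsurj ⟨k, hdk⟩
      refine ⟨h'.1, ⟨h'.2, congrArg Subtype.val hh'⟩, ?_⟩
      rintro y ⟨hy1, hy2⟩
      have he : L ⟨y, hy1⟩ = ⟨k, hdk⟩ := Subtype.ext hy2
      exact congrArg Subtype.val (hLinj (he.trans hh'.symm))
    · obtain ⟨h', hh'⟩ := hRsurj ⟨k, hdk⟩
      refine ⟨h'.1, ⟨h'.2, congrArg Subtype.val hh'⟩, ?_⟩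
      rintro y ⟨hy1, hy2⟩
      have he : Rm ⟨y, hy1⟩ = ⟨k, hdk⟩ := Subtype.ext hy2
      exact congrArg Subtype.val (hRinj (he.trans hh'.symm))
  · -- division → irreducible
    intro hdiv
    constructor
    · intro hu
      rw [P.isUnit_iff_deg_eq_zero hadd] at hu
      rw [hu] at hm
      have : (1 : ℕ) ≤ 0 := by exact_mod_cast hm
      omega
    · intro g h hgh
      have hgne : g ≠ 0 := by rintro rfl; rw [zero_mul] at hgh; exact hfne hgh
      have hhne : h ≠ 0 := by rintro rfl; rw [mul_zero] at hgh; exact hfne hgh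
      obtain ⟨ng, hng⟩ : ∃ n : ℕ, P.deg g = (n : WithBot ℕ) := by
        rcases P.deg_natCast_or_bot g with h' | h'
        · exact absurd h' hgne
        · exact h'
      obtain ⟨nh, hnh⟩ : ∃ n : ℕ, P.deg h = (n : WithBot ℕ) := by
        rcases P.deg_natCast_or_bot h with h' | h'
        · exact absurd h' hhne
        · exact h'
      have hsum := (P.deg_mul hadd hng hnh).1
      rw [← hgh, hf] at hsum
      have hmfsum : mf = ng + nh := by exact_mod_cast hsum
      have hmf1 : 1 ≤ mf := by
        rw [hf] at hm
        exact_mod_cast hm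
      rcases Nat.eq_zero_or_pos ng with hg0 | hgpos
      · left
        rw [P.isUnit_iff_deg_eq_zero hadd, hng, hg0]
      rcases Nat.eq_zero_or_pos nh with hh0 | hhpos
      · right
        rw [P.isUnit_iff_deg_eq_zero hadd, hnh, hh0]
      exfalso
      have hdg : P.deg g < P.deg f := by
        rw [hng, hf]
        exact_mod_cast (by omega : ng < mf)
      have hd0 : P.deg (0 : P.carrier) < P.deg f := by
        rw [DiffPolyRing.deg_zero]
        exact P.bot_lt_deg_f hm
      obtain ⟨h', hcond, huniq⟩ := (hdiv g hdg hgne 0 hd0).1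
      have hwh : P.deg h < P.deg f ∧ modf (g * h) = 0 := by
        refine ⟨?_, ?_⟩
        · rw [hnh, hf]
          exact_mod_cast (by omega : nh < mf)
        · rw [← hgh]
          exact P.modf_f hadd hf modf hmod hm
      have hw0 : P.deg (0 : P.carrier) < P.deg f ∧ modf (g * 0) = 0 :=
        ⟨hd0, by rw [mul_zero]; exact P.modf_zero hadd hf modf hmod hm⟩
      exact hhne ((huniq h hwh).trans (huniq 0 hw0).symm)
end

section
/- Let D be a division ring with derivation δ and let τ be a ring automorphism of D, c ∈ D, e ∈ D^×. The map H_{τ,c,e} : D[t;δ] → D[t;δ] sending Σ b_i t^i to Σ τ(b_i)(et + c)^i is a ring automorphism of D[t;δ] if and only if e lies in the center of D and c·τ(z) + e·δ(τ(z)) = τ(z)·c + τ(δ(z)) for all z ∈ D. -/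
namespace HAux

variable {D : Type*} [Ring D] {δ : D → D} (P : DiffPolyRing D δ)

lemma rep_symm_single (i : ℕ) (a : D) :
    P.rep.symm (Finsupp.single i a) = P.ι a * P.t ^ i := by
  rw [P.rep_symm_apply, Finsupp.sum_single_index]; simp

lemma rep_mon (i : ℕ) (a : D) : P.rep (P.ι a * P.t ^ i) = Finsupp.single i a := by
  rw [← rep_symm_single P i a, AddEquiv.apply_symm_apply]

lemma coeff_ι_mul (b : D) (q : P.carrier) (j : ℕ) :
    P.rep (P.ι b * q) j = b * P.rep q j := by
  obtain ⟨f, rfl⟩ := P.rep.symm.surjective q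
  induction f using Finsupp.induction_linear with
  | zero => simp
  | add f g hf hg =>
      have e1 : P.rep.symm (f + g) = P.rep.symm f + P.rep.symm g := map_add _ _ _
      have e2 : P.rep (P.ι b * P.rep.symm f + P.ι b * P.rep.symm g)
          = P.rep (P.ι b * P.rep.symm f) + P.rep (P.ι b * P.rep.symm g) := map_add _ _ _
      rw [e1, mul_add, e2, Finsupp.add_apply,
        (map_add P.rep (P.rep.symm f) (P.rep.symm g) : _), Finsupp.add_apply, hf, hg, mul_add]
  | single n a =>
      rw [rep_symm_single, ← mul_assoc, ← map_mul, rep_mon,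
        ← rep_symm_single P n a, AddEquiv.apply_symm_apply]
      simp only [Finsupp.single_apply]
      split <;> simp

lemma coeff_t_mul_succ (hd : ∀ a b : D, δ (a + b) = δ a + δ b) (q : P.carrier) (j : ℕ) :
    P.rep (P.t * q) (j + 1) = P.rep q j + δ (P.rep q (j + 1)) := by
  have hd0 : δ 0 = 0 := by
    have h := hd 0 0; rw [add_zero] at h; exact (left_eq_add.mp h)
  obtain ⟨f, rfl⟩ := P.rep.symm.surjective q
  induction f using Finsupp.induction_linear with
  | zero => simp [hd0]
  | add f g hf hg =>
      have e1 : P.rep.symm (f + g) = P.rep.symm f + P.rep.symm g := map_add _ _ _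
      have e2 : P.rep (P.t * P.rep.symm f + P.t * P.rep.symm g)
          = P.rep (P.t * P.rep.symm f) + P.rep (P.t * P.rep.symm g) := map_add _ _ _
      rw [e1, mul_add, e2, Finsupp.add_apply,
        (map_add P.rep (P.rep.symm f) (P.rep.symm g) : _), Finsupp.add_apply,
        Finsupp.add_apply, hf, hg, hd]
      abel
  | single n a =>
      rw [rep_symm_single]
      have key : P.t * (P.ι a * P.t ^ n) = P.ι a * P.t ^ (n+1) + P.ι (δ a) * P.t ^ n := by
        rw [← mul_assoc, P.tcomm, add_mul, mul_assoc, ← pow_succ']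
      have e2 : P.rep (P.ι a * P.t ^ (n+1) + P.ι (δ a) * P.t ^ n)
          = P.rep (P.ι a * P.t ^ (n+1)) + P.rep (P.ι (δ a) * P.t ^ n) := map_add _ _ _
      rw [key, e2, rep_mon, rep_mon, rep_mon, Finsupp.add_apply]
      simp only [Finsupp.single_apply]
      split_ifs <;> first | simp_all [hd0] | omega

lemma coeff_t_mul_zero (hd : ∀ a b : D, δ (a + b) = δ a + δ b) (q : P.carrier) :
    P.rep (P.t * q) 0 = δ (P.rep q 0) := by
  have hd0 : δ 0 = 0 := by
    have h := hd 0 0; rw [add_zero] at h; exact (left_eq_add.mp h)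
  obtain ⟨f, rfl⟩ := P.rep.symm.surjective q
  induction f using Finsupp.induction_linear with
  | zero => simp [hd0]
  | add f g hf hg =>
      have e1 : P.rep.symm (f + g) = P.rep.symm f + P.rep.symm g := map_add _ _ _
      have e2 : P.rep (P.t * P.rep.symm f + P.t * P.rep.symm g)
          = P.rep (P.t * P.rep.symm f) + P.rep (P.t * P.rep.symm g) := map_add _ _ _
      rw [e1, mul_add, e2, Finsupp.add_apply,
        (map_add P.rep (P.rep.symm f) (P.rep.symm g) : _), Finsupp.add_apply, hf, hg, hd]
  | single n a =>
      rw [rep_symm_single]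
      have key : P.t * (P.ι a * P.t ^ n) = P.ι a * P.t ^ (n+1) + P.ι (δ a) * P.t ^ n := by
        rw [← mul_assoc, P.tcomm, add_mul, mul_assoc, ← pow_succ']
      have e2 : P.rep (P.ι a * P.t ^ (n+1) + P.ι (δ a) * P.t ^ n)
          = P.rep (P.ι a * P.t ^ (n+1)) + P.rep (P.ι (δ a) * P.t ^ n) := map_add _ _ _
      rw [key, e2, rep_mon, rep_mon, rep_mon, Finsupp.add_apply]
      simp only [Finsupp.single_apply]
      split_ifs <;> first | simp_all [hd0] | omega

lemma rep_one : P.rep (1 : P.carrier) = Finsupp.single 0 1 := by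
  have : (1 : P.carrier) = P.ι 1 * P.t ^ 0 := by simp
  rw [this, rep_mon]

end HAux

open HAux in
/-- `H_{τ,c,e} : Σ b_i t^i ↦ Σ τ(b_i)(et+c)^i` is a ring automorphism
of `D[t;δ]` iff `e` is central and `c·τ(z) + e·δ(τ(z)) = τ(z)·c + τ(δ(z))` for all `z`. -/
theorem H_tau_c_e_automorphism_iff
    (D : Type*) [DivisionRing D] (δ : D → D)
    (hadd : ∀ a b : D, δ (a + b) = δ a + δ b)
    (hmul : ∀ a b : D, δ (a * b) = a * δ b + δ a * b)
    (P : DiffPolyRing D δ) (τ : D ≃+* D) (c e : D) (he : e ≠ 0)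
    (H : P.carrier → P.carrier)
    (hH : ∀ x : P.carrier,
      H x = (P.rep x).sum fun i b => P.ι (τ b) * (P.ι e * P.t + P.ι c) ^ i) :
    ((∀ x y : P.carrier, H (x + y) = H x + H y) ∧
     (∀ x y : P.carrier, H (x * y) = H x * H y) ∧
     H 1 = 1 ∧ Function.Bijective H) ↔
    ((∀ x : D, e * x = x * e) ∧
     ∀ z : D, c * τ z + e * δ (τ z) = τ z * c + τ (δ z)) := by
  set u : P.carrier := P.ι e * P.t + P.ι c with hu
  have hδ0 : δ 0 = 0 := by
    have h := hadd 0 0; rw [add_zero] at h; exact (left_eq_add.mp h)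
  -- H on monomials
  have hmon : ∀ (i : ℕ) (a : D), H (P.ι a * P.t ^ i) = P.ι (τ a) * u ^ i := by
    intro i a
    rw [hH, rep_mon, Finsupp.sum_single_index]
    simp
  have hι : ∀ a : D, H (P.ι a) = P.ι (τ a) := by
    intro a; have := hmon 0 a; simpa using this
  have ht : H P.t = u := by
    have := hmon 1 1; simpa using this
  -- H is additive
  have hHadd : ∀ x y : P.carrier, H (x + y) = H x + H y := by
    intro x y
    rw [hH, hH, hH, map_add, Finsupp.sum_add_index']
    · intro i; simp
    · intro i b₁ b₂; rw [map_add, map_add, add_mul]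
  have hH0 : H 0 = 0 := by rw [hH]; simp
  have hH1 : H 1 = 1 := by
    rw [hH, rep_one, Finsupp.sum_single_index] <;> simp
  -- expansions of u * ι (τ z) and ι (τ z) * u + ι (τ (δ z)) into "linear" form
  have hexp1 : ∀ z : D, u * P.ι (τ z)
      = P.ι (e * τ z) * P.t + P.ι (e * δ (τ z) + c * τ z) := by
    intro z
    rw [hu, add_mul, mul_assoc, P.tcomm (τ z), mul_add, ← mul_assoc, ← map_mul,
      ← map_mul, ← map_mul, map_add, add_assoc]
  have hexp2 : ∀ z : D, P.ι (τ z) * u + P.ι (τ (δ z))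
      = P.ι (τ z * e) * P.t + P.ι (τ z * c + τ (δ z)) := by
    intro z
    rw [hu, mul_add, ← mul_assoc, ← map_mul, ← map_mul, map_add, add_assoc]
  -- extracting coefficients from a linear identity
  have hlin : ∀ A B A' B' : D, P.ι A * P.t + P.ι B = P.ι A' * P.t + P.ι B' →
      A = A' ∧ B = B' := by
    intro A B A' B' hEq
    have h2 : (Finsupp.single 1 A + Finsupp.single 0 B : ℕ →₀ D)
        = Finsupp.single 1 A' + Finsupp.single 0 B' := by
      have e1 : ∀ X Y : D, P.rep (P.ι X * P.t + P.ι Y)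
          = Finsupp.single 1 X + Finsupp.single 0 Y := by
        intro X Y
        have := map_add P.rep (P.ι X * P.t) (P.ι Y)
        rw [this]
        have m1 := rep_mon P 1 X
        have m0 := rep_mon P 0 Y
        rw [pow_one] at m1; rw [pow_zero, mul_one] at m0
        rw [m1, m0]
      rw [← e1, ← e1, hEq]
    constructor
    · have := DFunLike.congr_fun h2 1
      simpa using this
    · have := DFunLike.congr_fun h2 0
      simpa using this
  constructor
  · rintro ⟨-, Hm, -, -⟩
    have key : ∀ z : D, P.ι (e * τ z) * P.t + P.ι (e * δ (τ z) + c * τ z)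
        = P.ι (τ z * e) * P.t + P.ι (τ z * c + τ (δ z)) := by
      intro z
      rw [← hexp1, ← hexp2]
      have h := Hm P.t (P.ι z)
      rw [ht, hι] at h
      rw [← h, P.tcomm z, hHadd, hι]
      have : H (P.ι z * P.t) = P.ι (τ z) * u := by
        have := hmon 1 z; simpa using this
      rw [this]
    constructor
    · intro x
      have h := (hlin _ _ _ _ (key (τ.symm x))).1
      simpa using h
    · intro z
      have h := (hlin _ _ _ _ (key z)).2
      rw [← h]; exact add_comm _ _
  · rintro ⟨hcen, hcond⟩
    -- key commutation
    have key : ∀ z : D, u * P.ι (τ z) = P.ι (τ z) * u + P.ι (τ (δ z)) := by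
      intro z
      rw [hexp1, hexp2, hcen (τ z)]
      congr 2
      rw [← hcond z, add_comm]
    -- H commutes with left multiplication by ι a
    have hA : ∀ (a : D) (z : P.carrier), H (P.ι a * z) = P.ι (τ a) * H z := by
      intro a z
      obtain ⟨f, rfl⟩ := P.rep.symm.surjective z
      induction f using Finsupp.induction_linear with
      | zero => simp [hH0]
      | add f g hf hg =>
          rw [(map_add P.rep.symm f g : _), mul_add, hHadd, hf, hg, hHadd, mul_add]
      | single n b =>
          rw [rep_symm_single, ← mul_assoc, ← map_mul, hmon, hmon, map_mul, map_mul, mul_assoc]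
    -- H commutes with right multiplication by t ^ j
    have hB : ∀ (z : P.carrier) (j : ℕ), H (z * P.t ^ j) = H z * u ^ j := by
      intro z j
      obtain ⟨f, rfl⟩ := P.rep.symm.surjective z
      induction f using Finsupp.induction_linear with
      | zero => simp [hH0]
      | add f g hf hg =>
          rw [(map_add P.rep.symm f g : _), add_mul, hHadd, hf, hg, hHadd, add_mul]
      | single n b =>
          rw [rep_symm_single, mul_assoc, ← pow_add, hmon, hmon, mul_assoc, pow_add]
    -- H on t ^ i * ι b
    have hC : ∀ (i : ℕ) (b : D), H (P.t ^ i * P.ι b) = u ^ i * P.ι (τ b) := by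
      intro i
      induction i with
      | zero => intro b; simpa using hι b
      | succ i ih =>
          intro b
          have hsplit : P.t ^ (i+1) * P.ι b
              = (P.t ^ i * P.ι b) * P.t + P.t ^ i * P.ι (δ b) := by
            rw [pow_succ, mul_assoc, P.tcomm b, mul_add, ← mul_assoc]
          have hBt : H ((P.t ^ i * P.ι b) * P.t) = H (P.t ^ i * P.ι b) * u := by
            have := hB (P.t ^ i * P.ι b) 1; simpa using this
          rw [hsplit, hHadd, hBt, ih b, ih (δ b), mul_assoc, ← mul_add,
            ← key b, ← mul_assoc, ← pow_succ]
    -- multiplicativity on monomials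
    have hmm : ∀ (i : ℕ) (a : D) (j : ℕ) (b : D),
        H ((P.ι a * P.t ^ i) * (P.ι b * P.t ^ j))
          = (P.ι (τ a) * u ^ i) * (P.ι (τ b) * u ^ j) := by
      intro i a j b
      have : (P.ι a * P.t ^ i) * (P.ι b * P.t ^ j)
          = P.ι a * ((P.t ^ i * P.ι b) * P.t ^ j) := by
        rw [mul_assoc, mul_assoc]
      rw [this, hA, hB, hC, mul_assoc, mul_assoc]
    -- full multiplicativity
    have Hm : ∀ x y : P.carrier, H (x * y) = H x * H y := by
      intro x y
      obtain ⟨f, rfl⟩ := P.rep.symm.surjective x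
      induction f using Finsupp.induction_linear with
      | zero => simp [hH0]
      | add f g hf hg =>
          rw [(map_add P.rep.symm f g : _), add_mul, hHadd, hf, hg, hHadd, add_mul]
      | single n a =>
          obtain ⟨g, rfl⟩ := P.rep.symm.surjective y
          induction g using Finsupp.induction_linear with
          | zero => simp [hH0]
          | add g₁ g₂ hg₁ hg₂ =>
              rw [(map_add P.rep.symm g₁ g₂ : _), mul_add, hHadd, hg₁, hg₂, hHadd, mul_add]
          | single m b =>
              rw [rep_symm_single, rep_symm_single, hmm, hmon, hmon]
    -- coefficients of powers of u
    have hupow : ∀ i : ℕ, P.rep (u ^ i) i = e ^ i ∧ ∀ j, i < j → P.rep (u ^ i) j = 0 := by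
      intro i
      induction i with
      | zero =>
          rw [pow_zero, rep_one]
          refine ⟨by simp, fun j hj => ?_⟩
          rw [Finsupp.single_apply, if_neg (by omega)]
      | succ i ih =>
          have hexpand : ∀ j : ℕ, P.rep (u ^ (i+1)) (j+1)
              = e * (P.rep (u ^ i) j + δ (P.rep (u ^ i) (j+1))) + c * P.rep (u ^ i) (j+1) := by
            intro j
            have h1 : u ^ (i+1) = P.ι e * (P.t * u ^ i) + P.ι c * u ^ i := by
              rw [pow_succ', hu, add_mul, mul_assoc]
            rw [h1, (map_add P.rep _ _ : _), Finsupp.add_apply, coeff_ι_mul, coeff_ι_mul,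
              coeff_t_mul_succ P hadd]
          constructor
          · rw [hexpand i, ih.1, ih.2 (i+1) (by omega), hδ0, add_zero, mul_zero, add_zero,
              ← pow_succ']
          · intro j hj
            obtain ⟨k, rfl⟩ : ∃ k, j = k + 1 := ⟨j - 1, by omega⟩
            rw [hexpand k, ih.2 k (by omega), ih.2 (k+1) (by omega), hδ0, add_zero, mul_zero,
              mul_zero, add_zero]
    -- injectivity
    have hinj0 : ∀ p : P.carrier, p ≠ 0 → H p ≠ 0 := by
      intro p hp
      have hf : P.rep p ≠ 0 := by
        intro h
        exact hp (by have := congrArg P.rep.symm h; simpa using this)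
      have hne : (P.rep p).support.Nonempty := Finsupp.support_nonempty_iff.mpr hf
      set n := (P.rep p).support.max' hne with hn
      have hcoeff : P.rep (H p) n = τ (P.rep p n) * e ^ n := by
        rw [hH, Finsupp.sum, map_sum, Finsupp.finset_sum_apply, Finset.sum_eq_single n]
        · rw [coeff_ι_mul, (hupow n).1]
        · intro i hi hine
          have hilt : i < n := lt_of_le_of_ne (Finset.le_max' _ i hi) hine
          rw [coeff_ι_mul, (hupow i).2 n hilt, mul_zero]
        · intro hnot; exact absurd ((P.rep p).support.max'_mem hne) hnot
      have hb : P.rep p n ≠ 0 := Finsupp.mem_support_iff.mp ((P.rep p).support.max'_mem hne)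
      have hτb : τ (P.rep p n) ≠ 0 := by
        intro h; exact hb (by have := congrArg τ.symm h; simpa using this)
      intro h0
      rw [h0, map_zero] at hcoeff
      exact (mul_ne_zero hτb (pow_ne_zero _ he)) (by simpa using hcoeff.symm)
    have hinj : Function.Injective H := by
      intro x y hxy
      have h := hHadd (x - y) y
      rw [sub_add_cancel, hxy] at h
      have h2 : H (x - y) = 0 := (right_eq_add.mp h)
      by_contra hne
      exact hinj0 (x - y) (sub_ne_zero.mpr hne) h2
    -- surjectivity
    have hHneg : ∀ x : P.carrier, H (-x) = - H x := by
      intro x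
      have h := hHadd x (-x)
      rw [add_neg_cancel, hH0] at h
      exact eq_neg_of_add_eq_zero_right h.symm
    set S : Subring P.carrier :=
      { carrier := Set.range H
        one_mem' := ⟨1, hH1⟩
        zero_mem' := ⟨0, hH0⟩
        mul_mem' := by rintro a b ⟨x, rfl⟩ ⟨y, rfl⟩; exact ⟨x * y, Hm x y⟩
        add_mem' := by rintro a b ⟨x, rfl⟩ ⟨y, rfl⟩; exact ⟨x + y, hHadd x y⟩
        neg_mem' := by rintro a ⟨x, rfl⟩; exact ⟨-x, hHneg x⟩ } with hS
    have htS : P.t ∈ S := by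
      refine ⟨P.ι (τ.symm e⁻¹) * P.t ^ 1 + P.ι (τ.symm (-(e⁻¹ * c))), ?_⟩
      rw [hHadd, hmon, hι, RingEquiv.apply_symm_apply, RingEquiv.apply_symm_apply, pow_one, hu,
        map_neg, map_mul, mul_add, ← mul_assoc, ← map_mul, inv_mul_cancel₀ he, map_one, one_mul]
      abel
    have hιS : ∀ a : D, P.ι a ∈ S :=
      fun a => ⟨P.ι (τ.symm a), by rw [hι, RingEquiv.apply_symm_apply]⟩
    have hsurj : Function.Surjective H := by
      intro p
      have hmem : p ∈ S := by
        have hp : p = (P.rep p).sum fun i a => P.ι a * P.t ^ i := by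
          rw [← P.rep_symm_apply, AddEquiv.symm_apply_apply]
        rw [hp, Finsupp.sum]
        exact S.sum_mem (fun i _ => S.mul_mem (hιS _) (S.pow_mem htS i))
      exact hmem
    exact ⟨hHadd, Hm, hH1, hinj, hsurj⟩
end

section
/- Let K be a field of characteristic p > 0 with derivation δ having minimum polynomial g(t) = t^p − t over F = Const(δ), and let f(t) = t^p − t − d ∈ K[t;δ] with d ∈ K. Then H_{id,−1} : Σ b_i t^i ↦ Σ b_i (t−1)^i induces an automorphism of the algebra (K,δ,d) = K[t;δ]/K[t;δ]f of order exactly p, and the subgroup ⟨H_{id,−1}⟩ of Aut((K,δ,d)) is cyclic of order p and leaves K invariant. -/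
namespace DPA

variable {K : Type*} [Field K] {δ : K → K} (P : DiffPolyRing K δ)

lemma symm_single (n : ℕ) (a : K) : P.rep.symm (Finsupp.single n a) = P.ι a * P.t ^ n := by
  rw [P.rep_symm_apply, Finsupp.sum_single_index (by simp)]

lemma rep_monomial (n : ℕ) (a : K) : P.rep (P.ι a * P.t ^ n) = Finsupp.single n a := by
  rw [← symm_single P n a, AddEquiv.apply_symm_apply]

lemma decomp (x : P.carrier) : x = (P.rep x).sum fun i a => P.ι a * P.t ^ i := by
  conv_lhs => rw [← AddEquiv.symm_apply_apply P.rep x]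
  rw [P.rep_symm_apply]

lemma rep_one : P.rep 1 = Finsupp.single 0 1 := by
  have : (1 : P.carrier) = P.ι 1 * P.t ^ 0 := by simp
  rw [this, rep_monomial]

def degLT (x : P.carrier) (n : ℕ) : Prop := ∀ i, n ≤ i → P.rep x i = 0

lemma degLT_mono {x : P.carrier} {m n : ℕ} (h : degLT P x m) (hmn : m ≤ n) : degLT P x n :=
  fun i hi => h i (le_trans hmn hi)

lemma degLT_zero (n : ℕ) : degLT P 0 n := by intro i _; simp

lemma degLT_add {x y : P.carrier} {n : ℕ} (hx : degLT P x n) (hy : degLT P y n) :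
    degLT P (x + y) n := by
  intro i hi
  rw [map_add, Finsupp.add_apply, hx i hi, hy i hi, add_zero]

lemma degLT_neg {x : P.carrier} {n : ℕ} (hx : degLT P x n) : degLT P (-x) n := by
  intro i hi
  rw [map_neg, Finsupp.neg_apply, hx i hi, neg_zero]

lemma degLT_sub {x y : P.carrier} {n : ℕ} (hx : degLT P x n) (hy : degLT P y n) :
    degLT P (x - y) n := by
  rw [sub_eq_add_neg]; exact degLT_add P hx (degLT_neg P hy)

lemma degLT_monomial {i n : ℕ} (h : i < n) (a : K) : degLT P (P.ι a * P.t ^ i) n := by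
  intro j hj
  rw [rep_monomial, Finsupp.single_apply, if_neg (by omega)]

lemma degLT_finsetSum {ι' : Type*} (s : Finset ι') (g : ι' → P.carrier) {n : ℕ}
    (h : ∀ i ∈ s, degLT P (g i) n) : degLT P (∑ i ∈ s, g i) n := by
  intro j hj
  rw [map_sum, Finsupp.finset_sum_apply]
  exact Finset.sum_eq_zero fun i hi => h i hi j hj

lemma support_lt {x : P.carrier} {n : ℕ} (hx : degLT P x n) {i : ℕ}
    (hi : i ∈ (P.rep x).support) : i < n := by
  by_contra h
  exact (Finsupp.mem_support_iff.mp hi) (hx i (by omega))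

lemma t_mul_monomial (i : ℕ) (a : K) :
    P.t * (P.ι a * P.t ^ i) = P.ι a * P.t ^ (i + 1) + P.ι (δ a) * P.t ^ i := by
  rw [← mul_assoc, P.tcomm, add_mul, mul_assoc, ← pow_succ']

lemma t_mul_eq (x : P.carrier) :
    P.t * x = (P.rep x).sum fun i a => (P.ι a * P.t ^ (i + 1) + P.ι (δ a) * P.t ^ i) := by
  conv_lhs => rw [decomp P x]
  rw [Finsupp.mul_sum]
  exact Finsupp.sum_congr fun i _ => t_mul_monomial P i _

lemma mul_t_eq (x : P.carrier) :
    x * P.t = (P.rep x).sum fun i a => P.ι a * P.t ^ (i + 1) := by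
  conv_lhs => rw [decomp P x]
  rw [Finsupp.sum_mul]
  exact Finsupp.sum_congr fun i _ => by rw [mul_assoc, ← pow_succ]

lemma degLT_t_mul {x : P.carrier} {n : ℕ} (hx : degLT P x n) : degLT P (P.t * x) (n + 1) := by
  rw [t_mul_eq, Finsupp.sum]
  apply degLT_finsetSum
  intro i hi
  have hilt : i < n := support_lt P hx hi
  exact degLT_add P (degLT_monomial P (by omega) _) (degLT_monomial P (by omega) _)

lemma degLT_mul_t {x : P.carrier} {n : ℕ} (hx : degLT P x n) : degLT P (x * P.t) (n + 1) := by
  rw [mul_t_eq, Finsupp.sum]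
  apply degLT_finsetSum
  intro i hi
  exact degLT_monomial P (by have := support_lt P hx hi; omega) _

lemma iota_mul_eq (a : K) (x : P.carrier) : P.ι a * x = P.rep.symm (a • P.rep x) := by
  rw [P.rep_symm_apply, Finsupp.sum_smul_index (by simp)]
  conv_lhs => rw [decomp P x]
  rw [Finsupp.mul_sum]
  exact Finsupp.sum_congr fun i _ => by rw [← mul_assoc, ← map_mul]

lemma rep_iota_mul (a : K) (x : P.carrier) (j : ℕ) :
    P.rep (P.ι a * x) j = a * P.rep x j := by
  rw [iota_mul_eq, AddEquiv.apply_symm_apply, Finsupp.smul_apply, smul_eq_mul]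

lemma degLT_iota_mul (a : K) {x : P.carrier} {n : ℕ} (hx : degLT P x n) :
    degLT P (P.ι a * x) n := by
  intro i hi
  rw [rep_iota_mul, hx i hi, mul_zero]

lemma tpow_comm (n : ℕ) (a : K) :
    ∃ r, P.t ^ n * P.ι a = P.ι a * P.t ^ n + r ∧ degLT P r n := by
  induction n with
  | zero => exact ⟨0, by simp, degLT_zero P 0⟩
  | succ n ih =>
    obtain ⟨r, hr, hrd⟩ := ih
    refine ⟨P.ι (δ a) * P.t ^ n + P.t * r, ?_, ?_⟩
    · rw [pow_succ', mul_assoc, hr, mul_add, t_mul_monomial, add_assoc, pow_succ']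
    · exact degLT_add P (degLT_monomial P (by omega) _) (degLT_t_mul P hrd)

lemma degLT_mul_iota (a : K) {x : P.carrier} {n : ℕ} (hx : degLT P x n) :
    degLT P (x * P.ι a) n := by
  have hx' : x * P.ι a = (P.rep x).sum fun i b => P.ι b * (P.t ^ i * P.ι a) := by
    conv_lhs => rw [decomp P x]
    rw [Finsupp.sum_mul]
    exact Finsupp.sum_congr fun i _ => mul_assoc _ _ _
  rw [hx', Finsupp.sum]
  apply degLT_finsetSum
  intro i hi
  obtain ⟨r, hr, hrd⟩ := tpow_comm P i a
  have hilt : i < n := support_lt P hx hi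
  rw [hr]
  refine degLT_iota_mul P _ (degLT_add P (degLT_monomial P hilt _) (degLT_mono P hrd (by omega)))

lemma rep_mul_t (x : P.carrier) :
    P.rep (x * P.t) = Finsupp.mapDomain (· + 1) (P.rep x) := by
  apply P.rep.symm.injective
  rw [AddEquiv.symm_apply_apply, P.rep_symm_apply,
    Finsupp.sum_mapDomain_index (by simp) (by intros; rw [map_add, add_mul])]
  rw [mul_t_eq]

lemma rep_mul_t_apply (x : P.carrier) (j : ℕ) : P.rep (x * P.t) (j + 1) = P.rep x j := by
  rw [rep_mul_t, Finsupp.mapDomain_apply (add_left_injective 1)]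

lemma rep_mul_tpow_apply (x : P.carrier) (j k : ℕ) :
    P.rep (x * P.t ^ k) (j + k) = P.rep x j := by
  induction k with
  | zero => simp
  | succ n ih =>
    rw [pow_succ, ← mul_assoc, ← add_assoc, rep_mul_t_apply, ih]

lemma exists_top {x : P.carrier} (hx : x ≠ 0) :
    ∃ m, P.rep x m ≠ 0 ∧ degLT P x (m + 1) := by
  have h0 : P.rep x ≠ 0 := fun h => hx (by
    apply P.rep.injective; rw [h, map_zero])
  have hs : (P.rep x).support.Nonempty := Finsupp.support_nonempty_iff.mpr h0
  refine ⟨(P.rep x).support.max' hs, Finsupp.mem_support_iff.mp (Finset.max'_mem _ hs), ?_⟩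
  intro i hi
  by_contra h
  have := Finset.le_max' _ i (Finsupp.mem_support_iff.mpr h)
  omega

lemma iota_inj : Function.Injective P.ι := by
  intro a b h
  have h3 : Finsupp.single 0 a = Finsupp.single 0 b := by
    rw [← rep_monomial P 0 a, ← rep_monomial P 0 b, h]
  simpa [Finsupp.single_eq_same] using congrArg (fun g => g 0) h3

lemma cast_eq (n : ℕ) : (n : P.carrier) = P.ι (n : K) := by
  induction n with
  | zero => simp
  | succ k ih => rw [Nat.cast_succ, Nat.cast_succ, map_add, map_one, ih]

lemma deg_lt_iff (x : P.carrier) (n : ℕ) : P.deg x < (n : ℕ) ↔ degLT P x n := by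
  constructor
  · intro h i hi
    by_contra hne
    have hmem : i ∈ (P.rep x).support := Finsupp.mem_support_iff.mpr hne
    have h1 : (i : WithBot ℕ) ≤ (P.rep x).support.max := Finset.le_max hmem
    have h2 : (i : WithBot ℕ) < (n : ℕ) := lt_of_le_of_lt h1 h
    have : i < n := by exact_mod_cast h2
    omega
  · intro h
    unfold DiffPolyRing.deg
    rcases hM : (P.rep x).support.max with _ | m
    · exact WithBot.bot_lt_coe n
    · have hmem : m ∈ (P.rep x).support := Finset.mem_of_max hM
      have hmn : m < n := support_lt P h hmem
      exact (WithBot.coe_lt_coe).mpr hmn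

section Subst

variable (c : K)

noncomputable def subst (x : P.carrier) : P.carrier :=
  (P.rep x).sum fun i b => P.ι b * (P.t + P.ι c) ^ i

lemma subst_monomial (i : ℕ) (a : K) :
    subst P c (P.ι a * P.t ^ i) = P.ι a * (P.t + P.ι c) ^ i := by
  rw [subst, rep_monomial, Finsupp.sum_single_index (by simp)]

lemma subst_add (x y : P.carrier) : subst P c (x + y) = subst P c x + subst P c y := by
  unfold subst
  rw [map_add, Finsupp.sum_add_index' (by simp) (by intros; rw [map_add, add_mul])]

noncomputable def substA : P.carrier →+ P.carrier := AddMonoidHom.mk' (subst P c) (subst_add P c)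

lemma subst_sum {ι' : Type*} (s : Finset ι') (g : ι' → P.carrier) :
    subst P c (∑ i ∈ s, g i) = ∑ i ∈ s, subst P c (g i) :=
  map_sum (substA P c) g s

lemma subst_sub (x y : P.carrier) : subst P c (x - y) = subst P c x - subst P c y :=
  map_sub (substA P c) x y

lemma subst_iota_mul (a : K) (x : P.carrier) :
    subst P c (P.ι a * x) = P.ι a * subst P c x := by
  rw [subst, iota_mul_eq, AddEquiv.apply_symm_apply, Finsupp.sum_smul_index (by simp),
    subst, Finsupp.mul_sum]
  exact Finsupp.sum_congr fun i _ => by rw [← mul_assoc, ← map_mul]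

lemma u_mul_iota (a : K) :
    (P.t + P.ι c) * P.ι a = P.ι a * (P.t + P.ι c) + P.ι (δ a) := by
  rw [add_mul, P.tcomm, mul_add, ← map_mul, ← map_mul, mul_comm c a]
  abel

lemma subst_t_mul (x : P.carrier) :
    subst P c (P.t * x) = (P.t + P.ι c) * subst P c x := by
  rw [t_mul_eq, Finsupp.sum, subst_sum, subst, Finsupp.mul_sum, Finsupp.sum]
  refine Finset.sum_congr rfl fun i hi => ?_
  rw [subst_add, subst_monomial, subst_monomial, ← mul_assoc, u_mul_iota, add_mul,
    mul_assoc, ← pow_succ']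

lemma subst_tpow_mul (n : ℕ) (x : P.carrier) :
    subst P c (P.t ^ n * x) = (P.t + P.ι c) ^ n * subst P c x := by
  induction n with
  | zero => simp
  | succ n ih =>
    rw [pow_succ', mul_assoc, subst_t_mul, ih, pow_succ', mul_assoc]

lemma subst_mul (x y : P.carrier) : subst P c (x * y) = subst P c x * subst P c y := by
  conv_lhs => rw [decomp P x]
  rw [Finsupp.sum_mul, Finsupp.sum, subst_sum,
    show subst P c x = (P.rep x).sum fun i b => P.ι b * (P.t + P.ι c) ^ i from rfl,
    Finsupp.sum_mul, Finsupp.sum]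
  refine Finset.sum_congr rfl fun i hi => ?_
  rw [mul_assoc, subst_iota_mul, subst_tpow_mul, mul_assoc]

lemma subst_one : subst P c 1 = 1 := by
  have h : (1 : P.carrier) = P.ι 1 * P.t ^ 0 := by simp
  rw [h, subst_monomial]; simp

lemma subst_pow (x : P.carrier) (n : ℕ) : subst P c (x ^ n) = (subst P c x) ^ n := by
  induction n with
  | zero => rw [pow_zero, pow_zero, subst_one]
  | succ n ih => rw [pow_succ, pow_succ, subst_mul, ih]

lemma subst_iota (a : K) : subst P c (P.ι a) = P.ι a := by
  have h : P.ι a = P.ι a * P.t ^ 0 := by simp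
  rw [h, subst_monomial]; simp

lemma subst_t : subst P c P.t = P.t + P.ι c := by
  have h : P.t = P.ι 1 * P.t ^ 1 := by simp
  rw [h, subst_monomial]; simp

lemma subst_subst (e : K) (x : P.carrier) :
    subst P c (subst P e x) = subst P (c + e) x := by
  rw [show subst P e x = (P.rep x).sum fun i b => P.ι b * (P.t + P.ι e) ^ i from rfl,
    Finsupp.sum, subst_sum, subst, Finsupp.sum]
  refine Finset.sum_congr rfl fun i hi => ?_
  rw [subst_mul, subst_iota, subst_pow, subst_add, subst_t, subst_iota, map_add, add_assoc]

lemma subst_zero (x : P.carrier) : subst P 0 x = x := by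
  conv_rhs => rw [decomp P x]
  rw [subst]
  exact Finsupp.sum_congr fun i _ => by rw [map_zero, add_zero]

lemma degLT_one : degLT P 1 1 := by
  intro j hj
  rw [rep_one, Finsupp.single_apply, if_neg (by omega)]

lemma degLT_u_pow (i : ℕ) : degLT P ((P.t + P.ι c) ^ i) (i + 1) := by
  induction i with
  | zero => rw [pow_zero]; exact degLT_one P
  | succ n ih =>
    rw [pow_succ, mul_add]
    exact degLT_add P (degLT_mul_t P ih) (degLT_mono P (degLT_mul_iota P c ih) (by omega))

lemma subst_degLT {x : P.carrier} {n : ℕ} (hx : degLT P x n) : degLT P (subst P c x) n := by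
  rw [subst, Finsupp.sum]
  apply degLT_finsetSum
  intro i hi
  have hilt : i < n := support_lt P hx hi
  exact degLT_iota_mul P _ (degLT_mono P (degLT_u_pow P c i) (by omega))

end Subst

lemma charP_carrier (p : ℕ) [CharP K p] : CharP P.carrier p := by
  constructor
  intro n
  rw [cast_eq]
  constructor
  · intro h
    have h0 : (n : K) = 0 := iota_inj P (by rw [h, map_zero])
    exact (CharP.cast_eq_zero_iff K p n).mp h0
  · intro h
    rw [(CharP.cast_eq_zero_iff K p n).mpr h, map_zero]

end DPA


/-- for `g(t) = t^p - t` and `f = t^p - t - d`, the map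
`H_{id,-1} : Σ b_i t^i ↦ Σ b_i (t-1)^i` induces an automorphism of
`(K,δ,d) = K[t;δ]/K[t;δ]f` of order exactly `p`, generating a cyclic subgroup of
order `p` of the automorphism group which leaves `K` invariant. -/
theorem H_id_neg_one_order_p
    (K : Type*) [Field K] (p : ℕ) (hp : p.Prime) [CharP K p] (δ : K → K)
    (hadd : ∀ a b : K, δ (a + b) = δ a + δ b)
    (hmul : ∀ a b : K, δ (a * b) = a * δ b + δ a * b)
    (hδ : δ ≠ 0) (hmin : ∀ x : K, δ^[p] x = δ x)
    (d : K) (P : DiffPolyRing K δ)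
    (f : P.carrier) (hf : f = P.t ^ p - P.t - P.ι d)
    (H : P.carrier → P.carrier)
    (hH : ∀ x : P.carrier, H x = (P.rep x).sum fun i b => P.ι b * (P.t - 1) ^ i)
    (modf : P.carrier → P.carrier)
    (hmod : ∀ g : P.carrier, P.deg (modf g) < P.deg f ∧ ∃ q, g = q * f + modf g) :
    H f = f ∧
    (∀ g h : P.carrier, modf (H (g + h)) = modf (H g) + modf (H h)) ∧
    modf (H 1) = 1 ∧
    (∀ g h : P.carrier, P.deg g < P.deg f → P.deg h < P.deg f →
      modf (H (modf (g * h))) = modf (modf (H g) * modf (H h))) ∧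
    Set.BijOn (fun g => modf (H g))
      {g : P.carrier | P.deg g < P.deg f} {g : P.carrier | P.deg g < P.deg f} ∧
    (∀ g : P.carrier, P.deg g < P.deg f → (fun g => modf (H g))^[p] g = g) ∧
    (∀ j : ℕ, 0 < j → j < p →
      ∃ g : P.carrier, P.deg g < P.deg f ∧ (fun g => modf (H g))^[j] g ≠ g) ∧
    (∀ a : K, modf (H (P.ι a)) = P.ι a) := by
  classical
  have hp2 : 2 ≤ p := hp.two_le
  haveI : Fact p.Prime := ⟨hp⟩
  haveI : CharP P.carrier p := DPA.charP_carrier P p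
  have hι1 : P.ι (-1 : K) = -1 := by rw [map_neg, map_one]
  have hHs : ∀ x, H x = DPA.subst P (-1) x := by
    intro x
    rw [hH, DPA.subst]
    refine Finsupp.sum_congr fun i _ => ?_
    rw [hι1, ← sub_eq_add_neg]
  -- rep of f and degree of f
  have hrepf : P.rep f = Finsupp.single p 1 - Finsupp.single 1 1 - Finsupp.single 0 d := by
    have h : f = P.ι 1 * P.t ^ p - P.ι 1 * P.t ^ 1 - P.ι d * P.t ^ 0 := by rw [hf]; simp
    rw [h, map_sub, map_sub, DPA.rep_monomial, DPA.rep_monomial, DPA.rep_monomial]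
  have hfp : P.rep f p = 1 := by
    rw [hrepf, Finsupp.sub_apply, Finsupp.sub_apply, Finsupp.single_eq_same,
      Finsupp.single_apply, Finsupp.single_apply, if_neg (by omega), if_neg (by omega)]
    ring
  have hfLT : DPA.degLT P f (p + 1) := by
    intro i hi
    rw [hrepf, Finsupp.sub_apply, Finsupp.sub_apply, Finsupp.single_apply,
      Finsupp.single_apply, Finsupp.single_apply, if_neg (by omega), if_neg (by omega),
      if_neg (by omega)]
    ring
  have hdegf : P.deg f = (p : ℕ) := by
    have hub : P.deg f < ((p + 1 : ℕ) : WithBot ℕ) := (DPA.deg_lt_iff P f (p + 1)).mpr hfLT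
    have hlb : ¬ P.deg f < ((p : ℕ) : WithBot ℕ) := by
      intro h
      have h0 := (DPA.deg_lt_iff P f p).mp h p le_rfl
      rw [hfp] at h0
      exact one_ne_zero h0
    refine le_antisymm ?_ (not_lt.mp hlb)
    rcases hD : P.deg f with _ | k
    · exact bot_le
    · rw [hD] at hub
      have hk : k < p + 1 := WithBot.coe_lt_coe.mp hub
      exact (WithBot.coe_le_coe).mpr (Nat.lt_succ_iff.mp hk)
  have hbr : ∀ x : P.carrier, P.deg x < P.deg f ↔ DPA.degLT P x p := by
    intro x; rw [hdegf]; exact DPA.deg_lt_iff P x p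
  have hmodlt : ∀ g, DPA.degLT P (modf g) p := fun g => (hbr _).mp (hmod g).1
  -- leading coefficient of x * f
  have hrepmf : ∀ (x : P.carrier) (m : ℕ), DPA.degLT P x (m + 1) →
      P.rep (x * f) (m + p) = P.rep x m := by
    intro x m hx
    rw [hf, mul_sub, mul_sub, map_sub, map_sub, Finsupp.sub_apply, Finsupp.sub_apply,
      DPA.rep_mul_tpow_apply]
    have h1 : P.rep (x * P.t) (m + p) = 0 := by
      obtain ⟨q, rfl⟩ : ∃ q, p = q + 2 := ⟨p - 2, by omega⟩
      have he : m + (q + 2) = (m + q + 1) + 1 := by ring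
      rw [he, DPA.rep_mul_t_apply]
      exact hx _ (by omega)
    have h2 : P.rep (x * P.ι d) (m + p) = 0 := DPA.degLT_mul_iota P d hx _ (by omega)
    rw [h1, h2]
    ring
  have key : ∀ q : P.carrier, DPA.degLT P (q * f) p → q * f = 0 := by
    intro q hq
    by_cases h0 : q = 0
    · rw [h0, zero_mul]
    · obtain ⟨m, hm, hmd⟩ := DPA.exists_top P h0
      exact absurd (by rw [← hrepmf q m hmd]; exact hq (m + p) (by omega)) hm
  have modf_unique : ∀ z q r, DPA.degLT P r p → z = q * f + r → modf z = r := by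
    intro z q r hr hz
    obtain ⟨q', hq'⟩ := (hmod z).2
    have h3 : q * f + r = q' * f + modf z := by rw [← hz, ← hq']
    have h4 : r - modf z = (q' - q) * f := by
      have h5 : (q * f + r) - (q * f) - modf z = r - modf z := by abel
      rw [← h5, h3, sub_mul]
      abel
    have h6 := key (q' - q) (by rw [← h4]; exact DPA.degLT_sub P hr (hmodlt z))
    rw [h6] at h4
    exact (sub_eq_zero.mp h4).symm
  have modf_self : ∀ z, DPA.degLT P z p → modf z = z := fun z hz =>
    modf_unique z 0 z hz (by rw [zero_mul, zero_add])
  have modf_congr : ∀ z₁ z₂ q, z₁ = q * f + z₂ → modf z₁ = modf z₂ := by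
    intro z₁ z₂ q h
    obtain ⟨q₂, hq₂⟩ := (hmod z₂).2
    refine modf_unique z₁ (q + q₂) (modf z₂) (hmodlt z₂) ?_
    calc z₁ = q * f + z₂ := h
    _ = q * f + (q₂ * f + modf z₂) := by rw [← hq₂]
    _ = (q + q₂) * f + modf z₂ := by rw [add_mul]; abel
  -- the action on low-degree elements
  have hact : ∀ g, DPA.degLT P g p → modf (H g) = DPA.subst P (-1) g := by
    intro g hg
    rw [hHs]
    exact modf_self _ (DPA.subst_degLT P _ hg)
  have hsub1 : ∀ g : P.carrier, DPA.subst P (1 : K) (DPA.subst P (-1) g) = g := by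
    intro g
    have h : (1 : K) + -1 = 0 := by ring
    rw [DPA.subst_subst, h, DPA.subst_zero]
  have hsub1' : ∀ g : P.carrier, DPA.subst P (-1 : K) (DPA.subst P 1 g) = g := by
    intro g
    have h : (-1 : K) + 1 = 0 := by ring
    rw [DPA.subst_subst, h, DPA.subst_zero]
  -- Statement 1
  have hHf : H f = f := by
    rw [hHs, hf, DPA.subst_sub, DPA.subst_sub, DPA.subst_pow, DPA.subst_t, DPA.subst_iota,
      hι1, ← sub_eq_add_neg, sub_pow_char_of_commute p (Commute.one_right P.t), one_pow]
    abel
  have hsf : DPA.subst P (-1 : K) f = f := by rw [← hHs]; exact hHf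
  -- Statement 2
  have st2 : ∀ g h : P.carrier, modf (H (g + h)) = modf (H g) + modf (H h) := by
    intro g h
    obtain ⟨q1, hq1⟩ := (hmod (H g)).2
    obtain ⟨q2, hq2⟩ := (hmod (H h)).2
    have hHadd : H (g + h) = H g + H h := by rw [hHs, hHs, hHs, DPA.subst_add]
    refine modf_unique _ (q1 + q2) _ (DPA.degLT_add P (hmodlt _) (hmodlt _)) ?_
    rw [hHadd, add_mul]
    calc H g + H h = (q1 * f + modf (H g)) + (q2 * f + modf (H h)) := by rw [← hq1, ← hq2]
    _ = q1 * f + q2 * f + (modf (H g) + modf (H h)) := by abel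
  -- Statement 3
  have st3 : modf (H 1) = 1 := by
    rw [hHs, DPA.subst_one]
    exact modf_self 1 (DPA.degLT_mono P (DPA.degLT_one P) (by omega))
  -- Statement 4
  have st4 : ∀ g h : P.carrier, P.deg g < P.deg f → P.deg h < P.deg f →
      modf (H (modf (g * h))) = modf (modf (H g) * modf (H h)) := by
    intro g h hg hh
    rw [hbr] at hg hh
    obtain ⟨q, hq⟩ := (hmod (g * h)).2
    have hHg : modf (H g) = H g := by rw [hHs]; exact modf_self _ (DPA.subst_degLT P _ hg)
    have hHh : modf (H h) = H h := by rw [hHs]; exact modf_self _ (DPA.subst_degLT P _ hh)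
    rw [hHg, hHh]
    have hmulH : H g * H h = H (g * h) := by
      rw [hHs g, hHs h, hHs (g * h), DPA.subst_mul]
    have hHgh : H (g * h) = DPA.subst P (-1 : K) q * f + H (modf (g * h)) := by
      conv_lhs => rw [hHs (g * h), hq]
      rw [DPA.subst_add, DPA.subst_mul, hsf, ← hHs (modf (g * h))]
    refine modf_congr _ _ (-(DPA.subst P (-1 : K) q)) ?_
    have h7 : H (modf (g * h)) = H (g * h) - DPA.subst P (-1 : K) q * f := by
      rw [hHgh]; abel
    rw [h7, ← hmulH, neg_mul]
    abel
  -- Statement 5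
  have st5 : Set.BijOn (fun g => modf (H g))
      {g : P.carrier | P.deg g < P.deg f} {g : P.carrier | P.deg g < P.deg f} := by
    refine ⟨?_, ?_, ?_⟩
    · intro g hg
      have hg' := (hbr g).mp hg
      show modf (H g) ∈ {g : P.carrier | P.deg g < P.deg f}
      rw [Set.mem_setOf_eq, hact g hg', hbr]
      exact DPA.subst_degLT P _ hg'
    · intro g1 h1 g2 h2 heq
      have hg1 := (hbr _).mp h1
      have hg2 := (hbr _).mp h2
      simp only at heq
      rw [hact _ hg1, hact _ hg2] at heq
      have h9 := congrArg (DPA.subst P (1 : K)) heq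
      rw [hsub1, hsub1] at h9
      exact h9
    · intro g hg
      have hg' := (hbr _).mp hg
      refine ⟨DPA.subst P (1 : K) g, ?_, ?_⟩
      · rw [Set.mem_setOf_eq, hbr]
        exact DPA.subst_degLT P _ hg'
      · show modf (H _) = g
        rw [hact _ (DPA.subst_degLT P _ hg'), hsub1']
  -- iterates
  have hiter : ∀ (j : ℕ) (g : P.carrier), DPA.degLT P g p →
      (fun g => modf (H g))^[j] g = DPA.subst P (-(j : K)) g := by
    intro j
    induction j with
    | zero =>
      intro g hg
      simp only [Function.iterate_zero, id_eq, Nat.cast_zero, neg_zero]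
      exact (DPA.subst_zero P g).symm
    | succ n ih =>
      intro g hg
      rw [Function.iterate_succ_apply, hact g hg, ih _ (DPA.subst_degLT P _ hg),
        DPA.subst_subst]
      congr 1
      push_cast
      ring
  -- Statement 6
  have st6 : ∀ g : P.carrier, P.deg g < P.deg f → (fun g => modf (H g))^[p] g = g := by
    intro g hg
    rw [hiter p g ((hbr g).mp hg), CharP.cast_eq_zero K p, neg_zero, DPA.subst_zero]
  -- Statement 7
  have st7 : ∀ j : ℕ, 0 < j → j < p →
      ∃ g : P.carrier, P.deg g < P.deg f ∧ (fun g => modf (H g))^[j] g ≠ g := by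
    intro j hj1 hj2
    have hdt : DPA.degLT P P.t p := by
      intro i hi
      have ht : P.t = P.ι 1 * P.t ^ 1 := by simp
      rw [ht, DPA.rep_monomial, Finsupp.single_apply, if_neg (by omega)]
    refine ⟨P.t, (hbr _).mpr hdt, ?_⟩
    rw [hiter j _ hdt, DPA.subst_t]
    intro hEq
    have h0 : P.ι (-(j : K)) = 0 := by
      have h := sub_eq_zero.mpr hEq
      rwa [add_sub_cancel_left] at h
    have h1 : (-(j : K)) = 0 := DPA.iota_inj P (by rw [h0, map_zero])
    have h2 : (j : K) = 0 := neg_eq_zero.mp h1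
    have h3 : p ∣ j := (CharP.cast_eq_zero_iff K p j).mp h2
    have h4 := Nat.le_of_dvd hj1 h3
    omega
  -- Statement 8
  have st8 : ∀ a : K, modf (H (P.ι a)) = P.ι a := by
    intro a
    rw [hHs, DPA.subst_iota]
    refine modf_self _ ?_
    intro i hi
    have h : P.ι a = P.ι a * P.t ^ 0 := by simp
    rw [h, DPA.rep_monomial, Finsupp.single_apply, if_neg (by omega)]
  exact ⟨hHf, st2, st3, st4, st5, st6, st7, st8⟩
end
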